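/- arXiv:1803.11553 — 2 statements merged into one kernel-verified Lean document; each statement's English description precedes it below -/
import Mathlib

section
/- For every ε, b, d > 0 there exist c, R > 0 such that the following holds for all sufficiently large n. If 𝒢 is a regular (b,d)-expander on n vertices, and 𝒮 is a collection of pairwise disjoint vertex subsets of 𝒢, each of size at least R, then for H ∼ 𝒢_ε the probability that there exist two sub-collections 𝒮₁, 𝒮₂ ⊆ 𝒮, each with a total of at least εn vertices in its union, such that no path of H connects a vertex of the union of 𝒮₁ to a vertex of the union of 𝒮₂, is at most exp(−c n). -/
open scoped Classical symmDiff

noncomputable section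

namespace Percolation

variable {V : Type} [Fintype V] [DecidableEq V]

/-- The edge set of `G` as a finset. -/
noncomputable def edgeFinset' (G : SimpleGraph V) : Finset (Sym2 V) :=
  Finset.univ.filter (· ∈ G.edgeSet)

/-- Probability that bond percolation on `G` with parameter `p` produces a spanning
subgraph satisfying `P`. -/
noncomputable def percProb (G : SimpleGraph V) (p : ℝ) (P : SimpleGraph V → Prop) : ℝ :=
  ∑ s ∈ (edgeFinset' G).powerset,
    (p ^ s.card * (1 - p) ^ ((edgeFinset' G).card - s.card)) *
      (if P (SimpleGraph.fromEdgeSet (↑s)) then 1 else 0)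

/-- Joint probability for two independent bond percolations on `G`. -/
noncomputable def percProb2 (G : SimpleGraph V) (p₁ p₂ : ℝ)
    (P : SimpleGraph V → SimpleGraph V → Prop) : ℝ :=
  ∑ s ∈ (edgeFinset' G).powerset, ∑ t ∈ (edgeFinset' G).powerset,
    (p₁ ^ s.card * (1 - p₁) ^ ((edgeFinset' G).card - s.card)) *
    (p₂ ^ t.card * (1 - p₂) ^ ((edgeFinset' G).card - t.card)) *
      (if P (SimpleGraph.fromEdgeSet (↑s)) (SimpleGraph.fromEdgeSet (↑t)) then 1 else 0)

/-- Number of edges of `G` joining `S` to its complement. -/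
noncomputable def cutCard (G : SimpleGraph V) (S : Finset V) : ℕ :=
  ((edgeFinset' G).filter (fun e => ∃ x ∈ S, ∃ y, y ∉ S ∧ e = s(x, y))).card

/-- `G` is a `(b,d)`-expander: max degree at most `d`, and every vertex set of size at most
`n/2` has at least `b|S|` edges to its complement. -/
def IsExpander (G : SimpleGraph V) (b : ℝ) (d : ℕ) : Prop :=
  (∀ v, (G.neighborSet v).ncard ≤ d) ∧
  ∀ S : Finset V, (S.card : ℝ) ≤ Fintype.card V / 2 → b * S.card ≤ cutCard G S

/-- `G` is a regular `(b,d)`-expander. -/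
def IsRegularExpander (G : SimpleGraph V) (b : ℝ) (d : ℕ) : Prop :=
  IsExpander G b d ∧ ∀ v, (G.neighborSet v).ncard = d

/-- The vertices of the connected component `c` of `G`. -/
noncomputable def compVerts (G : SimpleGraph V) (c : G.ConnectedComponent) : Finset V :=
  Finset.univ.filter (fun v => G.connectedComponentMk v = c)

/-- The edges of the connected component `c` of `G`. -/
noncomputable def compEdges (G : SimpleGraph V) (c : G.ConnectedComponent) : Finset (Sym2 V) :=
  (edgeFinset' G).filter (fun e => ∀ v ∈ e, G.connectedComponentMk v = c)

/-- `c` is a largest connected component of `G`. -/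
def IsLargestComp (G : SimpleGraph V) (c : G.ConnectedComponent) : Prop :=
  ∀ c' : G.ConnectedComponent, (compVerts G c').card ≤ (compVerts G c).card

/-- The 2-core of the connected component `c` of `G` : the maximal subgraph of `G`
supported inside `c` all of whose vertices have degree at least 2. -/
noncomputable def twoCoreComp (G : SimpleGraph V) (c : G.ConnectedComponent) : SimpleGraph V :=
  sSup {H : SimpleGraph V | H ≤ G ∧ (∀ v ∈ H.support, G.connectedComponentMk v = c) ∧
    ∀ v ∈ H.support, 2 ≤ (H.neighborSet v).ncard}

/-- The event `A^R_{x,y}(H)`: the connected component of `y` in `H` with the edge `xy`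
removed (if present) has at least `R` vertices. -/
def eventA (H : SimpleGraph V) (R : ℕ) (x y : V) : Prop :=
  R ≤ (compVerts (H.deleteEdges {s(x, y)})
        ((H.deleteEdges {s(x, y)}).connectedComponentMk y)).card

/-- `E₁(H)`: edges `xy` of `H` such that `A^R_{x,y}` or `A^R_{y,x}` holds. -/
noncomputable def E1set (H : SimpleGraph V) (R : ℕ) : Finset (Sym2 V) :=
  (edgeFinset' H).filter (fun e => ∃ x y, e = s(x, y) ∧ (eventA H R x y ∨ eventA H R y x))

/-- `V₁(H)`: vertices `x` such that for some `y`, `xy ∈ E(H)` and `A^R_{x,y}` holds. -/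
noncomputable def V1set (H : SimpleGraph V) (R : ℕ) : Finset V :=
  Finset.univ.filter (fun x => ∃ y, H.Adj x y ∧ eventA H R x y)

/-- `E₂(H)`: edges `xy` of `H` such that both `A^R_{x,y}` and `A^R_{y,x}` hold. -/
noncomputable def E2set (H : SimpleGraph V) (R : ℕ) : Finset (Sym2 V) :=
  (edgeFinset' H).filter (fun e => ∃ x y, e = s(x, y) ∧ eventA H R x y ∧ eventA H R y x)

/-- `V₂(H)`: vertices incident to an edge of `E₂(H)`. -/
noncomputable def V2set (H : SimpleGraph V) (R : ℕ) : Finset V :=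
  Finset.univ.filter (fun x => ∃ e ∈ E2set H R, x ∈ e)

/-- `V̄₁(H)`: vertices `y` such that `A^R_{x,y}(H)` holds for some `x`. -/
noncomputable def Vbar1 (H : SimpleGraph V) (R : ℕ) : Finset V :=
  Finset.univ.filter (fun y => ∃ x, eventA H R x y)

/-- `S` is `k`-thick in `H`: a union of pairwise disjoint subsets, each of size at least
`k`, each inducing a connected subgraph of `H`. -/
def IsThick (H : SimpleGraph V) (k : ℕ) (S : Finset V) : Prop :=
  ∃ P : Finset (Finset V),
    (∀ T ∈ P, k ≤ T.card ∧ (H.induce (↑T : Set V)).Connected) ∧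
    (↑P : Set (Finset V)).PairwiseDisjoint id ∧ S = P.biUnion id

/-- `S` is a separator of `K`. -/
def IsSeparator {W : Type} [Fintype W] (K : SimpleGraph W) (S : Finset W) : Prop :=
  ∃ A B : Finset W, Disjoint A B ∧ Disjoint A S ∧ Disjoint B S ∧
    (∀ w, w ∈ A ∨ w ∈ B ∨ w ∈ S) ∧
    (∀ a ∈ A, ∀ b ∈ B, ¬ K.Adj a b) ∧
    3 * A.card ≤ 2 * Fintype.card W ∧ 3 * B.card ≤ 2 * Fintype.card W

/-! ### Auxiliary probability lemmas -/

section ProbAux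

variable {γ : Type*} [DecidableEq γ]

lemma sum_w (p : ℝ) (A : Finset γ) :
    ∑ u ∈ A.powerset, p ^ u.card * (1 - p) ^ (A.card - u.card) = 1 := by
  have h := Finset.prod_add (fun _ : γ => p) (fun _ : γ => 1 - p) A
  simp only [Finset.prod_const] at h
  have hc : ∀ t ∈ A.powerset, p ^ t.card * (1 - p) ^ (A.card - t.card)
      = p ^ t.card * (1 - p) ^ (A \ t).card := by
    intro t ht
    rw [Finset.card_sdiff_of_subset (Finset.mem_powerset.mp ht)]
  rw [Finset.sum_congr rfl hc, ← h]
  simp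

lemma sum_powerset_split (F A : Finset γ) (hA : A ⊆ F) (f : Finset γ → ℝ) :
    ∑ s ∈ F.powerset, f s
      = ∑ u ∈ A.powerset, ∑ v ∈ (F \ A).powerset, f (u ∪ v) := by
  rw [← Finset.sum_product']
  refine Finset.sum_nbij' (fun s => (s ∩ A, s \ A)) (fun uv => uv.1 ∪ uv.2) ?_ ?_ ?_ ?_ ?_
  · intro s hs
    simp only [Finset.mem_powerset] at hs
    simp only [Finset.mem_product, Finset.mem_powerset]
    constructor
    · exact Finset.inter_subset_right
    · intro x hx; simp only [Finset.mem_sdiff] at hx ⊢; exact ⟨hs hx.1, hx.2⟩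
  · intro uv huv
    simp only [Finset.mem_product, Finset.mem_powerset] at huv
    simp only [Finset.mem_powerset]
    exact Finset.union_subset (huv.1.trans hA) (huv.2.trans (Finset.sdiff_subset))
  · intro s hs
    simp only
    ext x; simp only [Finset.mem_union, Finset.mem_inter, Finset.mem_sdiff]; tauto
  · intro uv huv
    simp only [Finset.mem_product, Finset.mem_powerset] at huv
    have h1 : (uv.1 ∪ uv.2) ∩ A = uv.1 := by
      ext x
      simp only [Finset.mem_inter, Finset.mem_union]
      constructor
      · rintro ⟨hx | hx, hxA⟩
        · exact hx
        · exact absurd hxA (Finset.mem_sdiff.mp (huv.2 hx)).2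
      · intro hx; exact ⟨Or.inl hx, huv.1 hx⟩
    have h2 : (uv.1 ∪ uv.2) \ A = uv.2 := by
      ext x
      simp only [Finset.mem_sdiff, Finset.mem_union]
      constructor
      · rintro ⟨hx | hx, hxA⟩
        · exact absurd (huv.1 hx) hxA
        · exact hx
      · intro hx; exact ⟨Or.inr hx, (Finset.mem_sdiff.mp (huv.2 hx)).2⟩
    simp only [h1, h2]
  · intro s hs
    simp only
    congr 1
    ext x; simp only [Finset.mem_union, Finset.mem_inter, Finset.mem_sdiff]; tauto

lemma factor (p : ℝ) (l : List (Finset γ)) :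
    ∀ F : Finset γ, (∀ E ∈ l, E ⊆ F) → l.Pairwise Disjoint →
    ∑ s ∈ F.powerset, p ^ s.card * (1 - p) ^ (F.card - s.card)
        * (l.map (fun E => if E ⊆ s then (0:ℝ) else 1)).prod
      = (l.map (fun E => 1 - p ^ E.card)).prod := by
  induction l with
  | nil =>
    intro F _ _
    simp only [List.map_nil, List.prod_nil, mul_one]
    exact sum_w p F
  | cons E₀ l ih =>
    intro F hsub hdisj
    have hE₀F : E₀ ⊆ F := hsub E₀ List.mem_cons_self
    rw [sum_powerset_split F E₀ hE₀F]
    have key : ∀ u ∈ E₀.powerset, ∀ v ∈ (F \ E₀).powerset,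
        p ^ (u ∪ v).card * (1 - p) ^ (F.card - (u ∪ v).card)
          * ((E₀ :: l).map (fun E => if E ⊆ u ∪ v then (0:ℝ) else 1)).prod
        = (p ^ u.card * (1 - p) ^ (E₀.card - u.card) * (if E₀ ⊆ u then (0:ℝ) else 1))
          * (p ^ v.card * (1 - p) ^ ((F \ E₀).card - v.card)
              * (l.map (fun E => if E ⊆ v then (0:ℝ) else 1)).prod) := by
      intro u hu v hv
      simp only [Finset.mem_powerset] at hu hv
      have hduv : Disjoint u v := by
        refine Finset.disjoint_left.mpr fun x hxu hxv => ?_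
        exact (Finset.mem_sdiff.mp (hv hxv)).2 (hu hxu)
      have hcard : (u ∪ v).card = u.card + v.card := Finset.card_union_of_disjoint hduv
      have h1 : u.card ≤ E₀.card := Finset.card_le_card hu
      have h2 : v.card ≤ (F \ E₀).card := Finset.card_le_card hv
      have h3 : (F \ E₀).card = F.card - E₀.card := Finset.card_sdiff_of_subset hE₀F
      have h4 : E₀.card ≤ F.card := Finset.card_le_card hE₀F
      have hexp : F.card - (u.card + v.card)
          = (E₀.card - u.card) + ((F \ E₀).card - v.card) := by omega
      have hif0 : (E₀ ⊆ u ∪ v) ↔ (E₀ ⊆ u) := by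
        constructor
        · intro h x hx
          rcases Finset.mem_union.mp (h hx) with h' | h'
          · exact h'
          · exact absurd hx (Finset.mem_sdiff.mp (hv h')).2
        · intro h; exact h.trans Finset.subset_union_left
      have hifl : (l.map (fun E => if E ⊆ u ∪ v then (0:ℝ) else 1))
          = (l.map (fun E => if E ⊆ v then (0:ℝ) else 1)) := by
        refine List.map_congr_left fun E hE => ?_
        have hdisjE : Disjoint E₀ E := (List.pairwise_cons.mp hdisj).1 E hE
        have : (E ⊆ u ∪ v) ↔ (E ⊆ v) := by
          constructor
          · intro h x hx
            rcases Finset.mem_union.mp (h hx) with h' | h'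
            · exact absurd (hu h') (Finset.disjoint_right.mp hdisjE hx)
            · exact h'
          · intro h; exact h.trans Finset.subset_union_right
        simp only [this]
      rw [List.map_cons, List.prod_cons, hifl, hcard, hexp, pow_add, pow_add]
      simp only [hif0]
      ring
    rw [Finset.sum_congr rfl (fun u hu => Finset.sum_congr rfl (fun v hv => key u hu v hv))]
    rw [← Finset.sum_mul_sum]
    have hfirst : ∑ u ∈ E₀.powerset,
        p ^ u.card * (1 - p) ^ (E₀.card - u.card) * (if E₀ ⊆ u then (0:ℝ) else 1)
        = 1 - p ^ E₀.card := by
      have hsplit : ∀ u ∈ E₀.powerset,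
          p ^ u.card * (1 - p) ^ (E₀.card - u.card) * (if E₀ ⊆ u then (0:ℝ) else 1)
          = p ^ u.card * (1 - p) ^ (E₀.card - u.card)
            - p ^ u.card * (1 - p) ^ (E₀.card - u.card) * (if u = E₀ then 1 else 0) := by
        intro u hu
        have hu' := Finset.mem_powerset.mp hu
        by_cases h : E₀ ⊆ u
        · have : u = E₀ := subset_antisymm hu' h
          simp [h, this]
        · have : ¬ u = E₀ := fun he => h (he ▸ subset_refl _)
          simp [h, this]
      rw [Finset.sum_congr rfl hsplit, Finset.sum_sub_distrib, sum_w]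
      have : ∑ u ∈ E₀.powerset,
          p ^ u.card * (1 - p) ^ (E₀.card - u.card) * (if u = E₀ then (1:ℝ) else 0)
          = p ^ E₀.card := by
        rw [Finset.sum_eq_single_of_mem E₀ (Finset.mem_powerset_self _)]
        · simp
        · intro u hu hne; simp [hne]
      rw [this]
    rw [hfirst, ih (F \ E₀) (fun E hE => ?_) (List.pairwise_cons.mp hdisj).2]
    · simp only [List.map_cons, List.prod_cons]
    · refine Finset.subset_sdiff.mpr ⟨hsub E (List.mem_cons_of_mem _ hE), ?_⟩
      exact ((List.pairwise_cons.mp hdisj).1 E hE).symm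

lemma list_prod_le_pow {β : ℝ} (hβ : 0 ≤ β) :
    ∀ l : List ℝ, (∀ r ∈ l, 0 ≤ r ∧ r ≤ β) → l.prod ≤ β ^ l.length := by
  intro l
  induction l with
  | nil => simp
  | cons r l ih =>
    intro h
    simp only [List.prod_cons, List.length_cons, pow_succ]
    have h1 := h r List.mem_cons_self
    have h2 : l.prod ≤ β ^ l.length := ih fun x hx => h x (List.mem_cons_of_mem _ hx)
    have h3 : 0 ≤ l.prod := List.prod_nonneg fun x hx => (h x (List.mem_cons_of_mem _ hx)).1
    calc r * l.prod ≤ β * β ^ l.length := mul_le_mul h1.2 h2 h3 hβ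
      _ = β ^ l.length * β := mul_comm _ _

end ProbAux

/-! ### Auxiliary graph lemmas -/

variable {G : SimpleGraph V}

lemma mem_edgeFinset' {e : Sym2 V} : e ∈ edgeFinset' G ↔ e ∈ G.edgeSet := by
  simp [edgeFinset']

/-- outer vertex boundary -/
noncomputable def outerB (G : SimpleGraph V) (S : Finset V) : Finset V :=
  Finset.univ.filter fun v => v ∉ S ∧ ∃ u ∈ S, G.Adj u v

noncomputable def ballStep (G : SimpleGraph V) (D S : Finset V) : Finset V :=
  S ∪ ((outerB G S) \ D)

noncomputable def ball (G : SimpleGraph V) (D U : Finset V) : ℕ → Finset V :=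
  fun j => (ballStep G D)^[j] (U \ D)

lemma ball_succ (D U : Finset V) (j : ℕ) :
    ball G D U (j + 1) = ballStep G D (ball G D U j) :=
  Function.iterate_succ_apply' _ _ _

lemma ball_mono (D U : Finset V) (j : ℕ) : ball G D U j ⊆ ball G D U (j+1) := by
  rw [ball_succ]; exact Finset.subset_union_left

lemma ball_walk (D U : Finset V) :
    ∀ j, ∀ v ∈ ball G D U j, v ∉ D ∧ ∃ u ∈ U, ∃ w : G.Walk u v,
      w.length ≤ j ∧ ∀ x ∈ w.support, x ∉ D := by
  intro j
  induction j with
  | zero =>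
    intro v hv
    rw [ball] at hv
    simp only [Function.iterate_zero, id_eq, Finset.mem_sdiff] at hv
    refine ⟨hv.2, v, hv.1, SimpleGraph.Walk.nil, by simp, ?_⟩
    intro x hx
    simp only [SimpleGraph.Walk.support_nil, List.mem_singleton] at hx
    subst hx; exact hv.2
  | succ j ih =>
    intro v hv
    rw [ball_succ, ballStep, Finset.mem_union] at hv
    rcases hv with hv | hv
    · obtain ⟨hD, u, hu, w, hl, hsup⟩ := ih v hv
      exact ⟨hD, u, hu, w, hl.trans (Nat.le_succ _), hsup⟩
    · rw [Finset.mem_sdiff] at hv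
      obtain ⟨hvo, hvD⟩ := hv
      rw [outerB, Finset.mem_filter] at hvo
      obtain ⟨-, hvS, u', hu', hadj⟩ := hvo
      obtain ⟨hD, u, hu, w, hl, hsup⟩ := ih u' hu'
      refine ⟨hvD, u, hu, w.concat hadj, ?_, ?_⟩
      · rw [SimpleGraph.Walk.length_concat]; omega
      · intro x hx
        rw [SimpleGraph.Walk.support_concat, List.mem_append] at hx
        rcases hx with hx | hx
        · exact hsup x hx
        · simp only [List.mem_singleton] at hx; subst hx; exact hvD

lemma card_incidence_le {d : ℕ} (hd : ∀ v : V, (G.neighborSet v).ncard = d) (y : V) :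
    (Finset.univ.filter (fun e : Sym2 V => e ∈ G.edgeSet ∧ y ∈ e)).card ≤ d := by
  classical
  have hn : (Finset.univ.filter (fun w => G.Adj y w)).card = d := by
    rw [← hd y, ← Set.ncard_coe_finset]
    congr 1
    ext w
    simp [SimpleGraph.neighborSet]
  rw [← hn]
  refine Finset.card_le_card_of_injOn
    (fun e => if h : y ∈ e then Sym2.Mem.other' h else y) ?_ ?_
  · intro e he
    simp only [Finset.mem_coe, Finset.mem_filter, Finset.mem_univ, true_and] at he ⊢
    rw [dif_pos he.2]
    have hspec := Sym2.other_spec' he.2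
    have : e ∈ G.edgeSet := he.1
    rw [← hspec] at this
    exact this
  · intro e₁ h₁ e₂ h₂ heq
    simp only [Finset.mem_coe, Finset.mem_filter, Finset.mem_univ, true_and] at h₁ h₂
    simp only [dif_pos h₁.2, dif_pos h₂.2] at heq
    rw [← Sym2.other_spec' h₁.2, ← Sym2.other_spec' h₂.2, heq]

lemma cutCard_le_outer {d : ℕ} (hd : ∀ v : V, (G.neighborSet v).ncard = d) (S : Finset V) :
    cutCard G S ≤ d * (outerB G S).card := by
  classical
  cases isEmpty_or_nonempty V with
  | inl hV =>
    have : cutCard G S = 0 := by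
      rw [cutCard]
      apply Finset.card_eq_zero.mpr
      apply Finset.eq_empty_of_forall_notMem
      intro e he
      rw [Finset.mem_filter] at he
      obtain ⟨x, -⟩ := he.2
      exact hV.elim x
    omega
  | inr hV =>
    have : Inhabited V := Classical.inhabited_of_nonempty hV
    set f : Sym2 V → V := fun e => if h : ∃ z, z ∈ e ∧ z ∉ S then h.choose else default with hf
    rw [cutCard]
    refine Finset.card_le_mul_card_image_of_maps_to (f := f) ?_ d ?_
    · intro e he
      rw [Finset.mem_filter] at he
      obtain ⟨heG, x, hx, y, hy, hexy⟩ := he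
      have hex : ∃ z, z ∈ e ∧ z ∉ S := ⟨y, by rw [hexy]; exact Sym2.mem_mk_right x y, hy⟩
      have hspec := hex.choose_spec
      rw [outerB, Finset.mem_filter]
      have hfe : f e = hex.choose := dif_pos hex
      refine ⟨Finset.mem_univ _, ?_, x, hx, ?_⟩
      · rw [hfe]; exact hspec.2
      · have hz : f e ∈ e ∧ f e ∉ S := by rw [hfe]; exact hspec
        set w := f e with hw
        obtain ⟨hz1, hz2⟩ := hz
        rw [hexy] at hz1
        rcases Sym2.mem_iff.mp hz1 with h | h
        · exact absurd (h ▸ hx) hz2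
        · rw [h]
          rw [hexy] at heG
          exact (G.mem_edgeSet).mp (mem_edgeFinset'.mp heG)
    · intro y hy
      calc (Finset.filter (fun e => f e = y)
            (Finset.filter (fun e => ∃ x ∈ S, ∃ y, y ∉ S ∧ e = s(x, y)) (edgeFinset' G))).card
          ≤ (Finset.univ.filter (fun e : Sym2 V => e ∈ G.edgeSet ∧ y ∈ e)).card := by
            apply Finset.card_le_card
            intro e he
            simp only [Finset.mem_filter] at he ⊢
            obtain ⟨⟨heG, hcut⟩, hfe⟩ := he
            have hex : ∃ z, z ∈ e ∧ z ∉ S := by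
              obtain ⟨x, hx, z, hz, hexz⟩ := hcut
              exact ⟨z, by rw [hexz]; exact Sym2.mem_mk_right x z, hz⟩
            have hfe' : f e = hex.choose := dif_pos hex
            refine ⟨Finset.mem_univ _, mem_edgeFinset'.mp heG, ?_⟩
            rw [← hfe, hfe']
            exact hex.choose_spec.1
        _ ≤ d := card_incidence_le hd y

lemma cutCard_singleton_le {d : ℕ} (hd : ∀ v : V, (G.neighborSet v).ncard = d) (v : V) :
    cutCard G {v} ≤ d := by
  rw [cutCard]
  refine le_trans (Finset.card_le_card ?_) (card_incidence_le hd v)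
  intro e he
  simp only [Finset.mem_filter, Finset.mem_singleton] at he
  obtain ⟨heG, x, hx, y, hy, hexy⟩ := he
  rw [hx] at hexy
  simp only [Finset.mem_filter, Finset.mem_univ, true_and]
  exact ⟨mem_edgeFinset'.mp heG, by rw [hexy]; exact Sym2.mem_mk_left v y⟩


/-- indicator with the classical decidability instance (matching `percProb`) -/
noncomputable def indR (P : Prop) : ℝ := if P then 1 else 0

lemma indR_nonneg (P : Prop) : 0 ≤ indR P := by
  rw [indR]; split_ifs <;> norm_num

lemma indR_of {P : Prop} (h : P) : indR P = 1 := if_pos h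

lemma indR_of_not {P : Prop} (h : ¬ P) : indR P = 0 := if_neg h

lemma percProb_eq (G : SimpleGraph V) (p : ℝ) (P : SimpleGraph V → Prop) :
    percProb G p P = ∑ s ∈ (edgeFinset' G).powerset,
      (p ^ s.card * (1 - p) ^ ((edgeFinset' G).card - s.card)) *
        indR (P (SimpleGraph.fromEdgeSet (↑s : Set (Sym2 V)))) := rfl

set_option maxHeartbeats 2000000 in
theorem sprinkling_connects_large_families (ε b : ℝ) (d : ℕ)
    (hε : 0 < ε) (hb : 0 < b) (hd : 0 < d) :
    ∃ c > (0:ℝ), ∃ R : ℕ, 0 < R ∧ ∃ n₀ : ℕ,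
      ∀ (V : Type) [Fintype V] [DecidableEq V] (G : SimpleGraph V),
        n₀ ≤ Fintype.card V → IsRegularExpander G b d →
        ∀ 𝒮 : Finset (Finset V),
          (↑𝒮 : Set (Finset V)).PairwiseDisjoint id → (∀ T ∈ 𝒮, R ≤ T.card) →
          percProb G ε (fun H =>
              ∃ 𝒮₁ ⊆ 𝒮, ∃ 𝒮₂ ⊆ 𝒮,
                ε * Fintype.card V ≤ ((𝒮₁.biUnion id).card : ℝ) ∧
                ε * Fintype.card V ≤ ((𝒮₂.biUnion id).card : ℝ) ∧
                ∀ x ∈ 𝒮₁.biUnion id, ∀ y ∈ 𝒮₂.biUnion id, ¬ H.Reachable x y)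
            ≤ Real.exp (-c * Fintype.card V) := by
  by_cases hbd : (d:ℝ) < b
  · -- vacuous: no regular (b,d)-expander exists once n ≥ 2
    refine ⟨1, one_pos, 1, one_pos, 2, ?_⟩
    intro V _ _ G hn hreg 𝒮 _ _
    exfalso
    obtain ⟨⟨hdeg, hexp⟩, hd'⟩ := hreg
    have hV : Nonempty V := by
      rw [← Fintype.card_pos_iff]; omega
    obtain ⟨v⟩ := hV
    have h1 : ((({v} : Finset V).card : ℝ)) ≤ (Fintype.card V : ℝ) / 2 := by
      have : (2:ℝ) ≤ (Fintype.card V : ℝ) := by exact_mod_cast hn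
      simp only [Finset.card_singleton, Nat.cast_one]
      linarith
    have h2 := hexp {v} h1
    have h3 : (cutCard G {v} : ℝ) ≤ (d : ℝ) := by
      exact_mod_cast cutCard_singleton_le hd' v
    simp only [Finset.card_singleton, Nat.cast_one, mul_one] at h2
    linarith
  push_neg at hbd
  by_cases hε2 : ε ≤ 1/2
  swap
  · -- ε > 1/2 : the event is impossible
    push_neg at hε2
    refine ⟨1, one_pos, 1, one_pos, 1, ?_⟩
    intro V _ _ G hn hreg 𝒮 _ _
    have hzero : percProb G ε (fun H =>
        ∃ 𝒮₁ ⊆ 𝒮, ∃ 𝒮₂ ⊆ 𝒮,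
          ε * Fintype.card V ≤ ((𝒮₁.biUnion id).card : ℝ) ∧
          ε * Fintype.card V ≤ ((𝒮₂.biUnion id).card : ℝ) ∧
          ∀ x ∈ 𝒮₁.biUnion id, ∀ y ∈ 𝒮₂.biUnion id, ¬ H.Reachable x y) = 0 := by
      rw [percProb]
      apply Finset.sum_eq_zero
      intro s hs
      rw [if_neg, mul_zero]
      rintro ⟨S₁, hS₁, S₂, hS₂, hc₁, hc₂, hnp⟩
      have hdisj : Disjoint (S₁.biUnion id) (S₂.biUnion id) :=
        Finset.disjoint_left.mpr fun x h1' h2' =>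
          hnp x h1' x h2' (SimpleGraph.Reachable.refl x)
      have hle : (S₁.biUnion id).card + (S₂.biUnion id).card ≤ Fintype.card V := by
        rw [← Finset.card_union_of_disjoint hdisj]
        exact Finset.card_le_univ _
      have hn1 : (1:ℝ) ≤ (Fintype.card V : ℝ) := by exact_mod_cast hn
      have hle' : ((S₁.biUnion id).card : ℝ) + ((S₂.biUnion id).card : ℝ)
          ≤ (Fintype.card V : ℝ) := by exact_mod_cast hle
      nlinarith
    rw [hzero]
    positivity
  -- main case : 0 < ε ≤ 1/2, b ≤ d
  have hdR : (0:ℝ) < (d:ℝ) := by exact_mod_cast hd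
  set δ : ℝ := ε * b / (4 * d) with hδdef
  have hδpos : 0 < δ := by positivity
  have hδε : δ ≤ ε / 2 := by
    rw [hδdef, div_le_div_iff₀ (by positivity) (by norm_num)]
    nlinarith
  set L : ℕ := ⌈(2 * (d:ℝ)) / (ε * b)⌉₊ with hLdef
  have hLge : (2 * (d:ℝ)) / (ε * b) ≤ (L : ℝ) := Nat.le_ceil _
  have hLδ : (1:ℝ)/2 ≤ (L:ℝ) * δ := by
    have h := mul_le_mul_of_nonneg_right hLge hδpos.le
    calc (1:ℝ)/2 = (2 * (d:ℝ)) / (ε * b) * δ := by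
          rw [hδdef]; field_simp; ring
      _ ≤ (L:ℝ) * δ := h
  set α : ℝ := ε ^ (2 * L) with hαdef
  have hαpos : 0 < α := pow_pos hε _
  have hε1 : ε ≤ 1 := by linarith
  have hα1 : α ≤ 1 := pow_le_one₀ hε.le hε1
  set c : ℝ := α * δ / (4 * (2 * (L:ℝ) + 1)) with hcdef
  have hcpos : 0 < c := by positivity
  set R : ℕ := ⌈(2 * Real.log 2) / c⌉₊ + 1 with hRdef
  have hRge : (2 * Real.log 2) / c ≤ (R : ℝ) := by
    refine le_trans (Nat.le_ceil _) ?_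
    exact_mod_cast Nat.le_succ _
  have fact2 : 2 * Real.log 2 ≤ c * R := by
    rw [div_le_iff₀ hcpos] at hRge
    linarith
  refine ⟨c, hcpos, R, Nat.succ_pos _, max 2 ⌈α / (2 * c)⌉₊, ?_⟩
  intro V iV dV G hn hreg 𝒮 hSdisj hSR
  obtain ⟨⟨hdeg, hexp⟩, hd'⟩ := hreg
  set n : ℕ := Fintype.card V with hndef
  have hn2 : 2 ≤ n := le_trans (le_max_left _ _) hn
  have hnR : (2:ℝ) ≤ (n:ℝ) := by exact_mod_cast hn2
  have hnα : α ≤ 2 * c * n := by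
    have h1 : (⌈α / (2 * c)⌉₊ : ℝ) ≤ (n : ℝ) := by
      exact_mod_cast le_trans (le_max_right _ _) hn
    have h2 : α / (2 * c) ≤ (n : ℝ) := le_trans (Nat.le_ceil _) h1
    rw [div_le_iff₀ (by positivity)] at h2
    linarith
  set F : Finset (Sym2 V) := edgeFinset' G with hFdef
  set k : ℕ := ⌊δ * n / (2 * (L:ℝ) + 1)⌋₊ with hkdef
  have hkle : (k:ℝ) * (2 * (L:ℝ) + 1) ≤ δ * n := by
    have := Nat.floor_le (a := δ * n / (2 * (L:ℝ) + 1)) (by positivity)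
    rw [← le_div_iff₀ (by positivity)]
    exact this
  have hkgt : δ * n / (2 * (L:ℝ) + 1) < (k:ℝ) + 1 := Nat.lt_floor_add_one _
  have hβ0 : (0:ℝ) ≤ 1 - α := by linarith
  -- the per-pair bound
  have key2 : ∀ A B : Finset (Finset V),
      (∑ s ∈ F.powerset, ε ^ s.card * (1 - ε) ^ (F.card - s.card) *
        indR (ε * (n:ℝ) ≤ (((A.biUnion id).card : ℕ) : ℝ) ∧
             ε * (n:ℝ) ≤ (((B.biUnion id).card : ℕ) : ℝ) ∧
             ∀ x ∈ A.biUnion id, ∀ y ∈ B.biUnion id,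
               ¬ (SimpleGraph.fromEdgeSet (↑s : Set (Sym2 V))).Reachable x y))
      ≤ (1 - α) ^ k := by
    intro A B
    by_cases hgood : ε * (n:ℝ) ≤ (((A.biUnion id).card : ℕ) : ℝ) ∧
        ε * (n:ℝ) ≤ (((B.biUnion id).card : ℕ) : ℝ) ∧
        Disjoint (A.biUnion id) (B.biUnion id)
    swap
    · -- degenerate pair : the event is empty
      have hz : ∀ s ∈ F.powerset, ε ^ s.card * (1 - ε) ^ (F.card - s.card) *
          indR (ε * (n:ℝ) ≤ (((A.biUnion id).card : ℕ) : ℝ) ∧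
               ε * (n:ℝ) ≤ (((B.biUnion id).card : ℕ) : ℝ) ∧
               ∀ x ∈ A.biUnion id, ∀ y ∈ B.biUnion id,
                 ¬ (SimpleGraph.fromEdgeSet (↑s : Set (Sym2 V))).Reachable x y) = 0 := by
        intro s hs
        rw [indR_of_not, mul_zero]
        rintro ⟨h1, h2, h3⟩
        exact hgood ⟨h1, h2, Finset.disjoint_left.mpr fun x hx1 hx2 =>
          h3 x hx1 x hx2 (SimpleGraph.Reachable.refl x)⟩
      rw [Finset.sum_eq_zero hz]
      exact pow_nonneg hβ0 k
    obtain ⟨hU1, hU2, hUd⟩ := hgood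
    set U₁ : Finset V := A.biUnion id with hU1def
    set U₂ : Finset V := B.biUnion id with hU2def
    -- short path avoiding any small deleted set
    have pathlem : ∀ D : Finset V, ((D.card:ℝ) ≤ δ * n) → ∃ x y, x ∈ U₁ ∧ y ∈ U₂ ∧
        ∃ w : G.Walk x y, w.length ≤ 2*L ∧ ∀ v ∈ w.support, v ∉ D := by
      intro D hD
      have hballgrow : ∀ U : Finset V, ε * n ≤ (U.card:ℝ) →
          (n:ℝ)/2 < ((ball G D U L).card : ℝ) := by
        intro U hU
        have hδn : δ * (n:ℝ) ≤ ε/2 * n :=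
          mul_le_mul_of_nonneg_right hδε (Nat.cast_nonneg n)
        have key : ∀ j : ℕ, (n:ℝ)/2 < ((ball G D U j).card:ℝ) ∨
            (ε/2 * n + j * (δ * n) ≤ ((ball G D U j).card:ℝ)) := by
          intro j
          induction j with
          | zero =>
            right
            have hb0 : ball G D U 0 = U \ D := by rw [ball]; simp
            have hcard : U.card ≤ (U \ D).card + D.card := by
              refine le_trans (Finset.card_le_card fun x hx => ?_) (Finset.card_union_le _ _)
              rw [Finset.mem_union, Finset.mem_sdiff]
              by_cases h : x ∈ D
              · exact Or.inr h
              · exact Or.inl ⟨hx, h⟩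
            have hcard' : (U.card:ℝ) ≤ ((U \ D).card:ℝ) + D.card := by exact_mod_cast hcard
            rw [hb0]
            push_cast
            linarith
          | succ j ih =>
            rcases ih with h | h
            · left
              refine lt_of_lt_of_le h ?_
              exact_mod_cast Finset.card_le_card (ball_mono D U j)
            · by_cases hhalf : (n:ℝ)/2 < ((ball G D U j).card:ℝ)
              · left
                refine lt_of_lt_of_le hhalf ?_
                exact_mod_cast Finset.card_le_card (ball_mono D U j)
              · push_neg at hhalf
                right
                have hexp1 := hexp (ball G D U j) hhalf
                have hout' : (cutCard G (ball G D U j) : ℝ)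
                    ≤ (d:ℝ) * ((outerB G (ball G D U j)).card:ℝ) := by
                  exact_mod_cast cutCard_le_outer hd' (ball G D U j)
                have hj0 : (0:ℝ) ≤ (j:ℝ) * (δ * n) := by positivity
                have hxlb : ε/2 * n ≤ ((ball G D U j).card:ℝ) := by linarith
                have hOlb : 2 * δ * (n:ℝ) ≤ ((outerB G (ball G D U j)).card:ℝ) := by
                  have h1 : b * (ε/2 * (n:ℝ))
                      ≤ (d:ℝ) * ((outerB G (ball G D U j)).card:ℝ) := by nlinarith
                  have h2 : b * (ε/2 * (n:ℝ)) = (d:ℝ) * (2 * δ * n) := by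
                    rw [hδdef]; field_simp; ring
                  rw [h2] at h1
                  exact le_of_mul_le_mul_left h1 hdR
                have hsd : ((outerB G (ball G D U j)).card:ℝ)
                    ≤ (((outerB G (ball G D U j)) \ D).card:ℝ) + D.card := by
                  have h3 : (outerB G (ball G D U j)).card
                      ≤ ((outerB G (ball G D U j)) \ D).card + D.card := by
                    refine le_trans (Finset.card_le_card fun x hx => ?_)
                      (Finset.card_union_le _ _)
                    rw [Finset.mem_union, Finset.mem_sdiff]
                    by_cases hh : x ∈ D
                    · exact Or.inr hh
                    · exact Or.inl ⟨hx, hh⟩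
                  exact_mod_cast h3
                have hstep : ((ball G D U (j+1)).card:ℝ) = ((ball G D U j).card:ℝ)
                    + (((outerB G (ball G D U j)) \ D).card:ℝ) := by
                  rw [ball_succ, ballStep]
                  have hdis : Disjoint (ball G D U j) ((outerB G (ball G D U j)) \ D) := by
                    refine Finset.disjoint_left.mpr fun x hx1 hx2 => ?_
                    rw [Finset.mem_sdiff, outerB, Finset.mem_filter] at hx2
                    exact hx2.1.2.1 hx1
                  rw [Finset.card_union_of_disjoint hdis]
                  push_cast; ring
                push_cast
                rw [hstep]
                push_cast at h
                linarith
        rcases key L with h | h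
        · exact h
        · have h5 : (1/2:ℝ) * n ≤ ((L:ℝ) * δ) * n :=
            mul_le_mul_of_nonneg_right hLδ (Nat.cast_nonneg n)
          nlinarith
      have h1 := hballgrow U₁ hU1
      have h2 := hballgrow U₂ hU2
      have hinter : ¬ Disjoint (ball G D U₁ L) (ball G D U₂ L) := by
        intro hdis
        have hun : (ball G D U₁ L ∪ ball G D U₂ L).card ≤ n := Finset.card_le_univ _
        rw [Finset.card_union_of_disjoint hdis] at hun
        have h6 : ((ball G D U₁ L).card:ℝ) + ((ball G D U₂ L).card:ℝ) ≤ n := by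
          exact_mod_cast hun
        linarith
      obtain ⟨v, hv1, hv2⟩ := Finset.not_disjoint_iff.mp hinter
      obtain ⟨-, x, hx, w₁, hl₁, hs₁⟩ := ball_walk D U₁ L v hv1
      obtain ⟨-, y, hy, w₂, hl₂, hs₂⟩ := ball_walk D U₂ L v hv2
      refine ⟨x, y, hx, hy, w₁.append w₂.reverse, ?_, ?_⟩
      · rw [SimpleGraph.Walk.length_append, SimpleGraph.Walk.length_reverse]; omega
      · intro u hu
        rw [SimpleGraph.Walk.support_append] at hu
        rcases List.mem_append.mp hu with h | h
        · exact hs₁ u h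
        · have h' : u ∈ w₂.reverse.support := List.mem_of_mem_tail h
          rw [SimpleGraph.Walk.support_reverse] at h'
          exact hs₂ u (List.mem_reverse.mp h')
    -- greedy extraction of k vertex-disjoint short connecting walks
    have greedy : ∀ i : ℕ, i ≤ k → ∃ (f : ℕ → Finset (Sym2 V)) (g : ℕ → Finset V),
        (∀ j, j < i → ((g j).card ≤ 2*L+1 ∧ (f j).card ≤ 2*L ∧ f j ⊆ F ∧
          (∀ e ∈ f j, ∀ x ∈ e, x ∈ g j) ∧
          (∀ s : Finset (Sym2 V), f j ⊆ s → ∃ x ∈ U₁, ∃ y ∈ U₂,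
            (SimpleGraph.fromEdgeSet (↑s : Set (Sym2 V))).Reachable x y)))
        ∧ ∀ j₁, j₁ < i → ∀ j₂, j₂ < i → j₁ ≠ j₂ → Disjoint (g j₁) (g j₂) := by
      intro i
      induction i with
      | zero =>
        exact fun _ => ⟨fun _ => ∅, fun _ => ∅, fun j hj => absurd hj (by omega),
          fun j₁ hj₁ => absurd hj₁ (by omega)⟩
      | succ i ih =>
        intro hik
        obtain ⟨f, g, hprops, hgdisj⟩ := ih (by omega)
        set D : Finset V := (Finset.range i).biUnion g with hDdef
        have hDcard : ((D.card:ℝ)) ≤ δ * n := by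
          have h1 : D.card ≤ ∑ j ∈ Finset.range i, (g j).card := Finset.card_biUnion_le
          have h2 : ∑ j ∈ Finset.range i, (g j).card ≤ i * (2*L+1) := by
            refine le_trans (Finset.sum_le_card_nsmul _ _ (2*L+1)
              fun j hj => (hprops j (Finset.mem_range.mp hj)).1) ?_
            simp [Finset.card_range, smul_eq_mul]
          have h12 : (D.card : ℝ) ≤ (i:ℝ) * (2*(L:ℝ)+1) := by
            have h4 : (D.card:ℝ) ≤ ((i * (2*L+1) : ℕ) : ℝ) := by
              exact_mod_cast le_trans h1 h2
            push_cast at h4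
            linarith
          have hik' : (i:ℝ) ≤ (k:ℝ) := by exact_mod_cast (by omega : i ≤ k)
          have h13 : (i:ℝ) * (2*(L:ℝ)+1) ≤ (k:ℝ) * (2*(L:ℝ)+1) :=
            mul_le_mul_of_nonneg_right hik' (by positivity)
          linarith
        obtain ⟨x, y, hx, hy, w, hwl, hwD⟩ := pathlem D hDcard
        refine ⟨fun j => if j = i then w.edges.toFinset else f j,
                fun j => if j = i then w.support.toFinset else g j, ?_, ?_⟩
        · intro j hj
          by_cases hji : j = i
          · subst hji
            simp only [if_pos rfl, eq_self_iff_true, if_true]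
            refine ⟨?_, ?_, ?_, ?_, ?_⟩
            · refine le_trans (List.toFinset_card_le _) ?_
              rw [SimpleGraph.Walk.length_support]; omega
            · refine le_trans (List.toFinset_card_le _) ?_
              rw [SimpleGraph.Walk.length_edges]; exact hwl
            · intro e he
              rw [List.mem_toFinset] at he
              exact mem_edgeFinset'.mpr (w.edges_subset_edgeSet he)
            · intro e he x' hx'
              rw [List.mem_toFinset] at he
              rw [List.mem_toFinset]
              have hspec := Sym2.other_spec' hx'
              rw [← hspec] at he
              exact SimpleGraph.Walk.fst_mem_support_of_mem_edges w he
            · intro s hsub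
              have htr : ∀ e ∈ w.edges,
                  e ∈ (SimpleGraph.fromEdgeSet (↑s : Set (Sym2 V))).edgeSet := by
                intro e he
                rw [SimpleGraph.edgeSet_fromEdgeSet]
                exact ⟨hsub (List.mem_toFinset.mpr he),
                  SimpleGraph.not_isDiag_of_mem_edgeSet G (w.edges_subset_edgeSet he)⟩
              exact ⟨x, hx, y, hy, ⟨w.transfer _ htr⟩⟩
          · simp only [if_neg hji]
            exact hprops j (by omega)
        · intro j₁ hj₁ j₂ hj₂ hne
          have hgD : ∀ j', j' < i → g j' ⊆ D := fun j' hj' =>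
            Finset.subset_biUnion_of_mem g (Finset.mem_range.mpr hj')
          have hnew : ∀ j', j' < i → Disjoint (w.support.toFinset) (g j') := by
            intro j' hj'
            refine Finset.disjoint_left.mpr fun z hz1 hz2 => ?_
            rw [List.mem_toFinset] at hz1
            exact hwD z hz1 (hgD j' hj' hz2)
          rcases eq_or_ne j₁ i with h1 | h1 <;> rcases eq_or_ne j₂ i with h2 | h2
          · exact absurd (h1.trans h2.symm) hne
          · subst h1
            simp only [if_pos rfl, eq_self_iff_true, if_true, if_neg h2]
            exact hnew j₂ (by omega)
          · subst h2
            simp only [if_pos rfl, eq_self_iff_true, if_true, if_neg h1]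
            exact (hnew j₁ (by omega)).symm
          · simp only [if_neg h1, if_neg h2]
            exact hgdisj j₁ (by omega) j₂ (by omega) hne
    obtain ⟨f, g, hprops, hgdisj⟩ := greedy k le_rfl
    set l : List (Finset (Sym2 V)) := (List.range k).map f with hldef
    have hlsub : ∀ E ∈ l, E ⊆ F := by
      intro E hE
      rw [hldef, List.mem_map] at hE
      obtain ⟨j, hj, rfl⟩ := hE
      exact (hprops j (List.mem_range.mp hj)).2.2.1
    have hfdisj : ∀ j₁, j₁ < k → ∀ j₂, j₂ < k → j₁ ≠ j₂ → Disjoint (f j₁) (f j₂) := by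
      intro j₁ h1 j₂ h2 hne
      refine Finset.disjoint_left.mpr fun e he1 he2 => ?_
      revert he1 he2
      induction e using Sym2.ind with
      | _ a c =>
        intro he1 he2
        have ha1 := (hprops j₁ h1).2.2.2.1 _ he1 a (Sym2.mem_mk_left a c)
        have ha2 := (hprops j₂ h2).2.2.2.1 _ he2 a (Sym2.mem_mk_left a c)
        exact Finset.disjoint_left.mp (hgdisj j₁ h1 j₂ h2 hne) ha1 ha2
    have hldisj : l.Pairwise Disjoint := by
      rw [hldef, List.pairwise_map]
      refine List.Pairwise.imp_of_mem ?_ List.pairwise_lt_range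
      intro a b' ha hb hlt
      exact hfdisj a (List.mem_range.mp ha) b' (List.mem_range.mp hb) (Nat.ne_of_lt hlt)
    calc (∑ s ∈ F.powerset, ε ^ s.card * (1 - ε) ^ (F.card - s.card) *
          indR (ε * (n:ℝ) ≤ ((U₁.card : ℕ) : ℝ) ∧
               ε * (n:ℝ) ≤ ((U₂.card : ℕ) : ℝ) ∧
               ∀ x ∈ U₁, ∀ y ∈ U₂,
                 ¬ (SimpleGraph.fromEdgeSet (↑s : Set (Sym2 V))).Reachable x y))
        ≤ ∑ s ∈ F.powerset, ε ^ s.card * (1 - ε) ^ (F.card - s.card) *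
            (l.map (fun E => if E ⊆ s then (0:ℝ) else 1)).prod := by
          refine Finset.sum_le_sum fun s hs => ?_
          have hw : (0:ℝ) ≤ ε ^ s.card * (1 - ε) ^ (F.card - s.card) :=
            mul_nonneg (pow_nonneg hε.le _) (pow_nonneg (by linarith) _)
          refine mul_le_mul_of_nonneg_left ?_ hw
          by_cases hbad : (ε * (n:ℝ) ≤ ((U₁.card : ℕ) : ℝ) ∧
               ε * (n:ℝ) ≤ ((U₂.card : ℕ) : ℝ) ∧
               ∀ x ∈ U₁, ∀ y ∈ U₂,
                 ¬ (SimpleGraph.fromEdgeSet (↑s : Set (Sym2 V))).Reachable x y)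
          · rw [indR_of hbad]
            have hall : ∀ r ∈ l.map (fun E => if E ⊆ s then (0:ℝ) else 1), r = 1 := by
              intro r hr
              rw [List.mem_map] at hr
              obtain ⟨E, hE, rfl⟩ := hr
              rw [hldef, List.mem_map] at hE
              obtain ⟨j, hj, rfl⟩ := hE
              rw [if_neg]
              intro hsub
              obtain ⟨x, hx, y, hy, hreach⟩ :=
                (hprops j (List.mem_range.mp hj)).2.2.2.2 s hsub
              exact hbad.2.2 x hx y hy hreach
            rw [List.prod_eq_one hall]
          · rw [indR_of_not hbad]
            refine List.prod_nonneg fun r hr => ?_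
            rw [List.mem_map] at hr
            obtain ⟨E, hE, rfl⟩ := hr
            split_ifs <;> norm_num
      _ = (l.map (fun E => 1 - ε ^ E.card)).prod := factor ε l F hlsub hldisj
      _ ≤ (1 - α) ^ k := by
          have hlen : (l.map (fun E => 1 - ε ^ E.card)).length = k := by
            simp [hldef]
          refine le_trans (list_prod_le_pow hβ0 _ ?_) (le_of_eq (by rw [hlen]))
          intro r hr
          rw [List.mem_map] at hr
          obtain ⟨E, hE, rfl⟩ := hr
          rw [hldef, List.mem_map] at hE
          obtain ⟨j, hj, rfl⟩ := hE
          have hcard : (f j).card ≤ 2*L := (hprops j (List.mem_range.mp hj)).2.1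
          constructor
          · have := pow_le_one₀ hε.le hε1 (n := (f j).card)
            linarith
          · have : α ≤ ε ^ (f j).card := by
              rw [hαdef]
              exact pow_le_pow_of_le_one hε.le hε1 hcard
            linarith
  -- union bound over pairs of subfamilies, then numeric bookkeeping
  have hm0 : (𝒮.card : ℝ) * R ≤ (n:ℝ) := by
    have hc1 : 𝒮.card * R ≤ ∑ T ∈ 𝒮, T.card := by
      have := Finset.card_nsmul_le_sum 𝒮 (fun T => T.card) R hSR
      simpa [smul_eq_mul] using this
    have hc2 : ∑ T ∈ 𝒮, T.card = (𝒮.biUnion id).card := by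
      refine (Finset.card_biUnion fun x hx y hy hxy => ?_).symm
      exact hSdisj (Finset.mem_coe.mpr hx) (Finset.mem_coe.mpr hy) hxy
    have hc3 : (𝒮.biUnion id).card ≤ n := Finset.card_le_univ _
    exact_mod_cast le_trans hc1 (hc2 ▸ hc3)
  have f6 : 2 * Real.log 2 * (𝒮.card:ℝ) ≤ c * n := by
    have e1 : 2 * Real.log 2 * (𝒮.card:ℝ) ≤ (c * R) * (𝒮.card:ℝ) :=
      mul_le_mul_of_nonneg_right fact2 (Nat.cast_nonneg _)
    have e2 : c * ((𝒮.card:ℝ) * R) ≤ c * n :=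
      mul_le_mul_of_nonneg_left hm0 hcpos.le
    nlinarith
  have f3 : 4 * c * (n:ℝ) - α ≤ α * k := by
    have heq : α * (δ * (n:ℝ) / (2 * (L:ℝ) + 1)) = 4 * c * n := by
      rw [hcdef]; field_simp
    have := mul_lt_mul_of_pos_left hkgt hαpos
    rw [heq] at this
    nlinarith
  calc percProb G ε (fun H =>
        ∃ 𝒮₁ ⊆ 𝒮, ∃ 𝒮₂ ⊆ 𝒮,
          ε * (n:ℝ) ≤ ((𝒮₁.biUnion id).card : ℝ) ∧
          ε * (n:ℝ) ≤ ((𝒮₂.biUnion id).card : ℝ) ∧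
          ∀ x ∈ 𝒮₁.biUnion id, ∀ y ∈ 𝒮₂.biUnion id, ¬ H.Reachable x y)
      = ∑ s ∈ F.powerset, ε ^ s.card * (1 - ε) ^ (F.card - s.card) *
        indR (∃ 𝒮₁ ⊆ 𝒮, ∃ 𝒮₂ ⊆ 𝒮,
            ε * (n:ℝ) ≤ (((𝒮₁.biUnion id).card : ℕ) : ℝ) ∧
            ε * (n:ℝ) ≤ (((𝒮₂.biUnion id).card : ℕ) : ℝ) ∧
            ∀ x ∈ 𝒮₁.biUnion id, ∀ y ∈ 𝒮₂.biUnion id,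
              ¬ (SimpleGraph.fromEdgeSet (↑s : Set (Sym2 V))).Reachable x y) := by
        rw [percProb_eq]
    _ ≤ ∑ s ∈ F.powerset, ε ^ s.card * (1 - ε) ^ (F.card - s.card) *
          (∑ A ∈ 𝒮.powerset, ∑ B ∈ 𝒮.powerset,
            indR (ε * (n:ℝ) ≤ (((A.biUnion id).card : ℕ) : ℝ) ∧
                 ε * (n:ℝ) ≤ (((B.biUnion id).card : ℕ) : ℝ) ∧
                 ∀ x ∈ A.biUnion id, ∀ y ∈ B.biUnion id,
                   ¬ (SimpleGraph.fromEdgeSet (↑s : Set (Sym2 V))).Reachable x y)) := by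
        refine Finset.sum_le_sum fun s hs => ?_
        have hw : (0:ℝ) ≤ ε ^ s.card * (1 - ε) ^ (F.card - s.card) :=
          mul_nonneg (pow_nonneg hε.le _) (pow_nonneg (by linarith) _)
        refine mul_le_mul_of_nonneg_left ?_ hw
        have hnn : ∀ A ∈ 𝒮.powerset, (0:ℝ) ≤ ∑ B ∈ 𝒮.powerset,
            indR (ε * (n:ℝ) ≤ (((A.biUnion id).card : ℕ) : ℝ) ∧
                 ε * (n:ℝ) ≤ (((B.biUnion id).card : ℕ) : ℝ) ∧
                 ∀ x ∈ A.biUnion id, ∀ y ∈ B.biUnion id,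
                   ¬ (SimpleGraph.fromEdgeSet (↑s : Set (Sym2 V))).Reachable x y) := by
          intro A _
          exact Finset.sum_nonneg fun B _ => indR_nonneg _
        by_cases hP : (∃ 𝒮₁ ⊆ 𝒮, ∃ 𝒮₂ ⊆ 𝒮,
            ε * (n:ℝ) ≤ (((𝒮₁.biUnion id).card : ℕ) : ℝ) ∧
            ε * (n:ℝ) ≤ (((𝒮₂.biUnion id).card : ℕ) : ℝ) ∧
            ∀ x ∈ 𝒮₁.biUnion id, ∀ y ∈ 𝒮₂.biUnion id,
              ¬ (SimpleGraph.fromEdgeSet (↑s : Set (Sym2 V))).Reachable x y)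
        · rw [indR_of hP]
          obtain ⟨S₁, hS₁, S₂, hS₂, hc1, hc2, hc3⟩ := hP
          have t1 : (1:ℝ) ≤ ∑ B ∈ 𝒮.powerset,
              indR (ε * (n:ℝ) ≤ (((S₁.biUnion id).card : ℕ) : ℝ) ∧
                   ε * (n:ℝ) ≤ (((B.biUnion id).card : ℕ) : ℝ) ∧
                   ∀ x ∈ S₁.biUnion id, ∀ y ∈ B.biUnion id,
                     ¬ (SimpleGraph.fromEdgeSet (↑s : Set (Sym2 V))).Reachable x y) := by
            have := Finset.single_le_sum (f := fun B =>
              indR (ε * (n:ℝ) ≤ (((S₁.biUnion id).card : ℕ) : ℝ) ∧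
                   ε * (n:ℝ) ≤ (((B.biUnion id).card : ℕ) : ℝ) ∧
                   ∀ x ∈ S₁.biUnion id, ∀ y ∈ B.biUnion id,
                     ¬ (SimpleGraph.fromEdgeSet (↑s : Set (Sym2 V))).Reachable x y))
              (fun B _ => indR_nonneg _)
              (Finset.mem_powerset.mpr hS₂)
            have hite : indR (ε * (n:ℝ) ≤ (((S₁.biUnion id).card : ℕ) : ℝ) ∧
                   ε * (n:ℝ) ≤ (((S₂.biUnion id).card : ℕ) : ℝ) ∧
                   ∀ x ∈ S₁.biUnion id, ∀ y ∈ S₂.biUnion id,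
                     ¬ (SimpleGraph.fromEdgeSet (↑s : Set (Sym2 V))).Reachable x y) = 1 := indR_of ⟨hc1, hc2, hc3⟩
            exact le_trans (le_of_eq hite.symm) this
          refine le_trans t1 ?_
          exact Finset.single_le_sum (f := fun A => ∑ B ∈ 𝒮.powerset,
              indR (ε * (n:ℝ) ≤ (((A.biUnion id).card : ℕ) : ℝ) ∧
                   ε * (n:ℝ) ≤ (((B.biUnion id).card : ℕ) : ℝ) ∧
                   ∀ x ∈ A.biUnion id, ∀ y ∈ B.biUnion id,
                     ¬ (SimpleGraph.fromEdgeSet (↑s : Set (Sym2 V))).Reachable x y)) hnn (Finset.mem_powerset.mpr hS₁)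
        · rw [indR_of_not hP]
          exact Finset.sum_nonneg hnn
    _ = ∑ A ∈ 𝒮.powerset, ∑ B ∈ 𝒮.powerset,
          (∑ s ∈ F.powerset, ε ^ s.card * (1 - ε) ^ (F.card - s.card) *
            indR (ε * (n:ℝ) ≤ (((A.biUnion id).card : ℕ) : ℝ) ∧
                 ε * (n:ℝ) ≤ (((B.biUnion id).card : ℕ) : ℝ) ∧
                 ∀ x ∈ A.biUnion id, ∀ y ∈ B.biUnion id,
                   ¬ (SimpleGraph.fromEdgeSet (↑s : Set (Sym2 V))).Reachable x y)) := by
        simp_rw [Finset.mul_sum]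
        rw [Finset.sum_comm]
        exact Finset.sum_congr rfl fun A _ => Finset.sum_comm
    _ ≤ ∑ A ∈ 𝒮.powerset, ∑ B ∈ 𝒮.powerset, (1 - α) ^ k :=
        Finset.sum_le_sum fun A _ => Finset.sum_le_sum fun B _ => key2 A B
    _ ≤ Real.exp (-c * n) := by
        rw [Finset.sum_const, Finset.sum_const, Finset.card_powerset, smul_smul,
          nsmul_eq_mul]
        have hcount : ((2 ^ 𝒮.card * 2 ^ 𝒮.card : ℕ) : ℝ)
            = Real.exp ((𝒮.card:ℝ) * Real.log 2) * Real.exp ((𝒮.card:ℝ) * Real.log 2) := by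
          rw [Real.exp_nat_mul, Real.exp_log (by norm_num : (0:ℝ) < 2)]
          push_cast
          ring
        have hβe : (1 - α) ^ k ≤ Real.exp ((k:ℝ) * (-α)) := by
          rw [Real.exp_nat_mul]
          refine pow_le_pow_left₀ hβ0 ?_ k
          have := Real.add_one_le_exp (-α)
          linarith
        calc ((2 ^ 𝒮.card * 2 ^ 𝒮.card : ℕ) : ℝ) * (1 - α) ^ k
            ≤ (Real.exp ((𝒮.card:ℝ) * Real.log 2) * Real.exp ((𝒮.card:ℝ) * Real.log 2))
              * Real.exp ((k:ℝ) * (-α)) := by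
              rw [hcount]
              refine mul_le_mul_of_nonneg_left hβe (by positivity)
          _ = Real.exp ((𝒮.card:ℝ) * Real.log 2 + ((𝒮.card:ℝ) * Real.log 2 + (k:ℝ) * (-α))) := by
              rw [Real.exp_add, Real.exp_add]
              ring
          _ ≤ Real.exp (-c * n) := by
              rw [Real.exp_le_exp]
              nlinarith [f6, f3, hnα]


end Percolation

end
end

section
/- Let b > 0, let d ≥ 3 be an integer, let ε > 0, set ε̂ = 3d√ε, and suppose ε̂ < (1/4)·(24d)^{−2/b}. Then there exist k = k(ε,b,d) and C > 0 such that the following holds. Let 𝒢 be a regular (b,d)-expander on n vertices, and color each edge of 𝒢 independently BLUE with probability ε̂ and RED otherwise. Then with probability at least 1 − C·2^{−εn}, every k-thick subset S of V(𝒢) with εn ≤ |S| ≤ n/2 satisfies that the number of RED edges of 𝒢 with one endpoint in S and the other in its complement is at least (b/2)·|S|. -/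
set_option linter.unusedSectionVars false
set_option linter.unusedVariables false


open scoped Classical symmDiff

noncomputable section

namespace Percolation

variable {V : Type} [Fintype V] [DecidableEq V]

/-- reachability within a finset -/
def ReachIn (G : SimpleGraph V) (T : Finset V) (x y : V) : Prop :=
  ∃ w : G.Walk x y, ∀ z ∈ w.support, z ∈ T

/-- connectivity of a finset: every two members joined by a walk inside -/
def ConnF (G : SimpleGraph V) (T : Finset V) : Prop :=
  ∀ x ∈ T, ∀ y ∈ T, ReachIn G T x y

lemma ReachIn.mem_left {G : SimpleGraph V} {T : Finset V} {x y : V}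
    (h : ReachIn G T x y) : x ∈ T := by
  obtain ⟨w, hw⟩ := h
  exact hw x w.start_mem_support

lemma ReachIn.mem_right {G : SimpleGraph V} {T : Finset V} {x y : V}
    (h : ReachIn G T x y) : y ∈ T := by
  obtain ⟨w, hw⟩ := h
  exact hw y w.end_mem_support

lemma ReachIn.refl {G : SimpleGraph V} {T : Finset V} {x : V} (hx : x ∈ T) :
    ReachIn G T x x :=
  ⟨SimpleGraph.Walk.nil, by simp [hx]⟩

lemma ReachIn.symm {G : SimpleGraph V} {T : Finset V} {x y : V}
    (h : ReachIn G T x y) : ReachIn G T y x := by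
  obtain ⟨w, hw⟩ := h
  exact ⟨w.reverse, by simpa using hw⟩

lemma ReachIn.trans {G : SimpleGraph V} {T : Finset V} {x y z : V}
    (h : ReachIn G T x y) (h' : ReachIn G T y z) : ReachIn G T x z := by
  obtain ⟨w, hw⟩ := h
  obtain ⟨w', hw'⟩ := h'
  refine ⟨w.append w', fun u hu => ?_⟩
  rcases (SimpleGraph.Walk.mem_support_append_iff _ _).1 hu with h | h
  · exact hw u h
  · exact hw' u h

lemma connF_of_induce_connected {G : SimpleGraph V} {T : Finset V}
    (h : (G.induce (↑T : Set V)).Connected) : ConnF G T := by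
  intro x hx y hy
  obtain ⟨w⟩ := h.preconnected ⟨x, hx⟩ ⟨y, hy⟩
  refine ⟨w.map (SimpleGraph.Embedding.induce (↑T : Set V)).toHom, fun z hz => ?_⟩
  erw [SimpleGraph.Walk.support_map, List.mem_map] at hz
  obtain ⟨⟨z', hz'⟩, _, rfl⟩ := hz
  exact hz'

/-- the connected component of `u` inside `T` -/
def CompIn (G : SimpleGraph V) (T : Finset V) (u : V) : Finset V :=
  T.filter (fun y => ReachIn G T u y)

lemma mem_compIn {G : SimpleGraph V} {T : Finset V} {u y : V} :
    y ∈ CompIn G T u ↔ y ∈ T ∧ ReachIn G T u y := by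
  simp [CompIn]

lemma self_mem_compIn {G : SimpleGraph V} {T : Finset V} {u : V} (hu : u ∈ T) :
    u ∈ CompIn G T u := mem_compIn.2 ⟨hu, ReachIn.refl hu⟩

lemma compIn_subset {G : SimpleGraph V} {T : Finset V} {u : V} :
    CompIn G T u ⊆ T := Finset.filter_subset _ _

/-- every vertex on a walk from u staying in T lies in the component of u -/
lemma reachIn_mem_compIn {G : SimpleGraph V} {T : Finset V} {u y : V}
    (h : ReachIn G T u y) {z : V} {w : G.Walk u y} (hw : ∀ a ∈ w.support, a ∈ T)
    (hz : z ∈ w.support) : z ∈ CompIn G T u := by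
  refine mem_compIn.2 ⟨hw z hz, ⟨w.takeUntil z hz, fun a ha => hw a (w.support_takeUntil_subset hz ha)⟩⟩

lemma connF_compIn {G : SimpleGraph V} {T : Finset V} {u : V} :
    ConnF G (CompIn G T u) := by
  intro x hx y hy
  obtain ⟨hxT, wx⟩ := mem_compIn.1 hx
  obtain ⟨hyT, wy⟩ := mem_compIn.1 hy
  obtain ⟨w1, hw1⟩ := wx
  obtain ⟨w2, hw2⟩ := wy
  refine ⟨w1.reverse.append w2, fun z hz => ?_⟩
  rcases (SimpleGraph.Walk.mem_support_append_iff _ _).1 hz with h | h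
  · rw [SimpleGraph.Walk.support_reverse, List.mem_reverse] at h
    exact reachIn_mem_compIn ⟨w1, hw1⟩ hw1 h
  · exact reachIn_mem_compIn ⟨w2, hw2⟩ hw2 h

lemma adj_mem_compIn {G : SimpleGraph V} {T : Finset V} {u x y : V}
    (hx : x ∈ CompIn G T u) (hy : y ∈ T) (hadj : G.Adj x y) :
    y ∈ CompIn G T u := by
  obtain ⟨hxT, hr⟩ := mem_compIn.1 hx
  refine mem_compIn.2 ⟨hy, hr.trans ⟨SimpleGraph.Walk.cons hadj SimpleGraph.Walk.nil, ?_⟩⟩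
  intro z hz
  simp only [SimpleGraph.Walk.support_cons, SimpleGraph.Walk.support_nil,
    List.mem_cons, List.mem_singleton] at hz
  rcases hz with rfl | hz
  · exact hxT
  · rcases hz with rfl | h
    · exact hy
    · simp at h

lemma not_mem_compIn_erase {G : SimpleGraph V} {T : Finset V} {v u : V} :
    v ∉ CompIn G (T.erase v) u := fun hc => by
  have := compIn_subset (G := G) (T := T.erase v) (u := u) hc
  simp at this

/-- avoid-component walk -/
lemma walk_avoiding {G : SimpleGraph V} {T : Finset V} {v u : V}
    (hv : v ∈ T) :
    ∀ (n : ℕ) (x : V) (w : G.Walk x v), w.length ≤ n → (∀ z ∈ w.support, z ∈ T) →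
      x ∉ CompIn G (T.erase v) u →
      ∃ w' : G.Walk x v, ∀ z ∈ w'.support, z ∈ T ∧ z ∉ CompIn G (T.erase v) u := by
  intro n
  induction n with
  | zero =>
    intro x w hlen hsupp hxC
    cases w with
    | nil =>
      exact ⟨SimpleGraph.Walk.nil, fun z hz => by
        simp only [SimpleGraph.Walk.support_nil, List.mem_singleton] at hz
        subst hz
        exact ⟨hv, not_mem_compIn_erase⟩⟩
    | cons hadj p => simp [SimpleGraph.Walk.length_cons] at hlen
  | succ n ihn =>
    intro x w hlen hsupp hxC
    cases w with
    | nil =>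
      exact ⟨SimpleGraph.Walk.nil, fun z hz => by
        simp only [SimpleGraph.Walk.support_nil, List.mem_singleton] at hz
        subst hz
        exact ⟨hv, not_mem_compIn_erase⟩⟩
    | @cons _ c _ hadj p =>
      by_cases hav : x = v
      · subst hav
        exact ⟨SimpleGraph.Walk.nil, fun z hz => by
          simp only [SimpleGraph.Walk.support_nil, List.mem_singleton] at hz
          subst hz
          exact ⟨hv, not_mem_compIn_erase⟩⟩
      · have haT : x ∈ T := hsupp x (SimpleGraph.Walk.start_mem_support _)
        have hcT : c ∈ T := by
          apply hsupp c
          simp [SimpleGraph.Walk.support_cons]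
        by_cases hcv : c = v
        · subst hcv
          refine ⟨SimpleGraph.Walk.cons hadj SimpleGraph.Walk.nil, fun z hz => ?_⟩
          simp only [SimpleGraph.Walk.support_cons, SimpleGraph.Walk.support_nil, List.mem_cons,
            List.mem_singleton, List.not_mem_nil, or_false] at hz
          rcases hz with rfl | rfl
          · exact ⟨haT, hxC⟩
          · exact ⟨hv, not_mem_compIn_erase⟩
        · have hcC : c ∉ CompIn G (T.erase v) u := by
            intro hcC
            exact hxC (adj_mem_compIn hcC (Finset.mem_erase.2 ⟨hav, haT⟩) hadj.symm)
          have hlen' : p.length ≤ n := by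
            rw [SimpleGraph.Walk.length_cons] at hlen
            omega
          obtain ⟨w', hw'⟩ := ihn c p hlen'
            (fun z hz => hsupp z (by simp [SimpleGraph.Walk.support_cons, hz])) hcC
          refine ⟨SimpleGraph.Walk.cons hadj w', fun z hz => ?_⟩
          rw [SimpleGraph.Walk.support_cons, List.mem_cons] at hz
          rcases hz with rfl | hz
          · exact ⟨haT, hxC⟩
          · exact hw' z hz

/-- the set of connected subsets of size c containing v -/
def Conn (G : SimpleGraph V) (v : V) (c : ℕ) : Finset (Finset V) :=
  Finset.univ.filter (fun T => v ∈ T ∧ T.card = c ∧ ConnF G T)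

lemma conn_card_le (G : SimpleGraph V) (d : ℕ)
    (hdeg : ∀ v : V, (G.neighborFinset v).card ≤ d) :
    ∀ c : ℕ, ∀ v : V, (Conn G v c).card ≤ d ^ (c - 1) * catalan (c - 1) := by
  intro c
  induction c using Nat.strong_induction_on with
  | _ c ih =>
    intro v
    match c with
    | 0 =>
      have : Conn G v 0 = ∅ := by
        ext T
        simp only [Conn, Finset.mem_filter, Finset.mem_univ, true_and, Finset.notMem_empty,
          iff_false]
        rintro ⟨hv, hc, -⟩
        rw [Finset.card_eq_zero] at hc
        subst hc
        simp at hv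
      simp [this]
    | 1 =>
      have : Conn G v 1 ⊆ {{v}} := by
        intro T hT
        simp only [Conn, Finset.mem_filter, Finset.mem_univ, true_and] at hT
        obtain ⟨hv, hc, -⟩ := hT
        rw [Finset.card_eq_one] at hc
        obtain ⟨a, rfl⟩ := hc
        simp only [Finset.mem_singleton] at hv ⊢
        subst hv
        rfl
      calc (Conn G v 1).card ≤ ({{v}} : Finset (Finset V)).card := Finset.card_le_card this
        _ = 1 := rfl
        _ ≤ _ := by simp [catalan]
    | (m + 2) =>
      set c := m + 2 with hc
      -- the injection T ↦ (C, T \ C)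
      -- target
      set tgt : Finset (Finset V × Finset V) :=
        ((G.neighborFinset v) ×ˢ Finset.Ioo 0 c).biUnion
          (fun p => (Conn G p.1 p.2) ×ˢ (Conn G v (c - p.2))) with htgt
      -- build the map
      have key : ∀ T ∈ Conn G v c, ∃ C R : Finset V, (C, R) ∈ tgt ∧ C ∪ R = T ∧ R = T \ C := by
        intro T hT
        simp only [Conn, Finset.mem_filter, Finset.mem_univ, true_and] at hT
        obtain ⟨hvT, hcard, hconn⟩ := hT
        -- find a neighbor of v in T
        have hex : ∃ u, G.Adj v u ∧ u ∈ T := by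
          obtain ⟨y, hyT, hyv⟩ : ∃ y ∈ T, y ≠ v := by
            have h2 : 1 < T.card := by omega
            obtain ⟨y, hy, hne⟩ := Finset.exists_mem_ne h2 v
            exact ⟨y, hy, hne⟩
          obtain ⟨w, hw⟩ := hconn v hvT y hyT
          cases w with
          | nil => exact absurd rfl hyv.symm
          | cons hadj p =>
            rename_i z
            refine ⟨z, hadj, hw z ?_⟩
            rw [SimpleGraph.Walk.support_cons]
            right
            exact SimpleGraph.Walk.start_mem_support _
        obtain ⟨u, hadj, huT⟩ := hex
        have huT' : u ∈ T.erase v := Finset.mem_erase.2 ⟨(G.ne_of_adj hadj).symm, huT⟩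
        set C := CompIn G (T.erase v) u with hC
        set R := T \ C with hR
        have hCsub : C ⊆ T := fun z hz => Finset.mem_of_mem_erase (compIn_subset hz)
        have huC : u ∈ C := self_mem_compIn huT'
        have hvC : v ∉ C := fun h => by
          have := compIn_subset (G := G) (T := T.erase v) (u := u) h
          simp at this
        have hvR : v ∈ R := Finset.mem_sdiff.2 ⟨hvT, hvC⟩
        have hCcard : 1 ≤ C.card := Finset.card_pos.2 ⟨u, huC⟩
        have hCcard' : C.card < c := by
          have : C.card ≤ (T.erase v).card := Finset.card_le_card compIn_subset
          rw [Finset.card_erase_of_mem hvT] at this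
          omega
        have hRcard : R.card = c - C.card := by
          rw [hR, Finset.card_sdiff_of_subset hCsub, hcard]
        -- ConnF R
        have hconnR : ConnF G R := by
          have hreach : ∀ x ∈ R, ReachIn G R x v := by
            intro x hxR
            obtain ⟨hxT, hxC⟩ := Finset.mem_sdiff.1 hxR
            obtain ⟨w, hw⟩ := hconn x hxT v hvT
            obtain ⟨w', hw'⟩ := walk_avoiding (u := u) hvT w.length x w le_rfl hw hxC
            exact ⟨w', fun z hz => Finset.mem_sdiff.2 (hw' z hz)⟩
          intro x hx y hy
          exact (hreach x hx).trans ((hreach y hy).symm)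
        -- memberships
        refine ⟨C, R, ?_, ?_, rfl⟩
        · rw [htgt, Finset.mem_biUnion]
          refine ⟨(u, C.card), ?_, ?_⟩
          · rw [Finset.mem_product]
            exact ⟨by rw [SimpleGraph.mem_neighborFinset]; exact hadj, Finset.mem_Ioo.2 ⟨hCcard, hCcard'⟩⟩
          · rw [Finset.mem_product]
            constructor
            · refine Finset.mem_filter.2 ⟨Finset.mem_univ _, huC, rfl, ?_⟩
              exact connF_compIn
            · refine Finset.mem_filter.2 ⟨Finset.mem_univ _, hvR, hRcard, ?_⟩
              exact hconnR
        · rw [hR, Finset.union_sdiff_of_subset hCsub]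
      -- choose the decomposition
      choose fC fR hmem hunion hRdef using key
      have hinj : (Conn G v c).card ≤ tgt.card := by
        refine Finset.card_le_card_of_injOn
          (fun T => if h : T ∈ Conn G v c then (fC T h, fR T h) else (∅, ∅)) ?_ ?_
        · intro T hT
          simp only [Finset.mem_coe.1 hT, dif_pos]
          exact hmem T hT
        · intro T hT T' hT' heq
          simp only [Finset.mem_coe] at hT hT'
          simp only [hT, hT', dif_pos, Prod.mk.injEq] at heq
          have h1 := hunion T hT
          have h2 := hunion T' hT'
          rw [heq.1, heq.2, h2] at h1
          exact h1.symm
      have htgtcard : tgt.card ≤ d ^ (c - 1) * catalan (c - 1) := by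
        calc tgt.card ≤ ∑ p ∈ (G.neighborFinset v) ×ˢ Finset.Ioo 0 c,
              ((Conn G p.1 p.2) ×ˢ (Conn G v (c - p.2))).card := Finset.card_biUnion_le
          _ = ∑ u ∈ G.neighborFinset v, ∑ j ∈ Finset.Ioo 0 c,
              (Conn G u j).card * (Conn G v (c - j)).card := by
              rw [Finset.sum_product]
              simp [Finset.card_product]
          _ ≤ ∑ u ∈ G.neighborFinset v, ∑ j ∈ Finset.Ioo 0 c,
              (d ^ (j - 1) * catalan (j - 1)) * (d ^ (c - j - 1) * catalan (c - j - 1)) := by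
              refine Finset.sum_le_sum fun u hu => Finset.sum_le_sum fun j hj => ?_
              obtain ⟨hj0, hjc⟩ := Finset.mem_Ioo.1 hj
              exact Nat.mul_le_mul (ih j hjc u) (ih (c - j) (by omega) v)
          _ = (G.neighborFinset v).card * ∑ j ∈ Finset.Ioo 0 c,
              (d ^ (j - 1) * catalan (j - 1)) * (d ^ (c - j - 1) * catalan (c - j - 1)) := by
              rw [Finset.sum_const, smul_eq_mul]
          _ ≤ d * ∑ j ∈ Finset.Ioo 0 c,
              (d ^ (j - 1) * catalan (j - 1)) * (d ^ (c - j - 1) * catalan (c - j - 1)) :=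
              Nat.mul_le_mul_right _ (hdeg v)
          _ = d * ∑ j ∈ Finset.Ioo 0 c, d ^ m * (catalan (j - 1) * catalan (c - j - 1)) := by
              congr 1
              refine Finset.sum_congr rfl fun j hj => ?_
              obtain ⟨hj0, hjc⟩ := Finset.mem_Ioo.1 hj
              have hpow : d ^ (j - 1) * d ^ (c - j - 1) = d ^ m := by
                rw [← pow_add]
                congr 1
                omega
              calc (d ^ (j - 1) * catalan (j - 1)) * (d ^ (c - j - 1) * catalan (c - j - 1))
                  = (d ^ (j - 1) * d ^ (c - j - 1)) * (catalan (j - 1) * catalan (c - j - 1)) := by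
                    ring
                _ = d ^ m * (catalan (j - 1) * catalan (c - j - 1)) := by rw [hpow]
          _ = d * (d ^ m * ∑ j ∈ Finset.Ioo 0 c, catalan (j - 1) * catalan (c - j - 1)) := by
              congr 1
              rw [Finset.mul_sum]
          _ = d * (d ^ m * catalan (m + 1)) := by
              congr 2
              have hmap : Finset.Ioo 0 c = (Finset.range (m + 1)).map
                  ⟨fun i => i + 1, add_left_injective 1⟩ := by
                ext j
                simp only [Finset.mem_Ioo, Finset.mem_map, Finset.mem_range,
                  Function.Embedding.coeFn_mk]
                constructor
                · rintro ⟨h0, hc⟩; exact ⟨j - 1, by omega, by omega⟩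
                · rintro ⟨i, hi, rfl⟩; omega
              rw [hmap, Finset.sum_map]
              simp only [Function.Embedding.coeFn_mk, Nat.add_sub_cancel]
              have hexp : ∀ i : ℕ, c - (i + 1) - 1 = m - i := fun i => by omega
              simp only [hexp]
              rw [Finset.sum_range fun i => catalan i * catalan (m - i), catalan_succ]
          _ = d ^ (c - 1) * catalan (c - 1) := by
              have h1 : c - 1 = m + 1 := by omega
              rw [h1, pow_succ]
              ring
      exact le_trans hinj htgtcard
  
lemma sum_weights (E : Finset (Sym2 V)) (p : ℝ) :
    ∑ s ∈ E.powerset, p ^ s.card * (1 - p) ^ (E.card - s.card) = 1 := by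
  have h := Finset.prod_add (fun _ : Sym2 V => p) (fun _ : Sym2 V => 1 - p) E
  simp only [Finset.prod_const, add_sub_cancel, one_pow] at h
  rw [Finset.sum_congr rfl (fun s hs => ?_)] at h
  · exact h.symm
  · rw [Finset.card_sdiff_of_subset (Finset.mem_powerset.1 hs)]

lemma weight_nonneg {p : ℝ} (hp0 : 0 ≤ p) (hp1 : p ≤ 1) (a b : ℕ) :
    0 ≤ p ^ a * (1 - p) ^ b :=
  mul_nonneg (pow_nonneg hp0 _) (pow_nonneg (by linarith) _)

lemma percProb_nonneg {G : SimpleGraph V} {p : ℝ} (hp0 : 0 ≤ p) (hp1 : p ≤ 1)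
    (P : SimpleGraph V → Prop) : 0 ≤ percProb G p P := by
  refine Finset.sum_nonneg fun s hs => mul_nonneg (weight_nonneg hp0 hp1 _ _) ?_
  split <;> norm_num

lemma percProb_ge_one_sub {G : SimpleGraph V} {p : ℝ} (hp0 : 0 ≤ p) (hp1 : p ≤ 1)
    {P : SimpleGraph V → Prop} {ι : Type} {I : Finset ι} {Q : ι → SimpleGraph V → Prop}
    (h : ∀ s ∈ (edgeFinset' G).powerset, ¬ P (SimpleGraph.fromEdgeSet (↑s : Set (Sym2 V))) →
      ∃ i ∈ I, Q i (SimpleGraph.fromEdgeSet (↑s : Set (Sym2 V)))) :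
    1 - ∑ i ∈ I, percProb G p (Q i) ≤ percProb G p P := by
  have key : ∀ s ∈ (edgeFinset' G).powerset,
      (p ^ s.card * (1 - p) ^ ((edgeFinset' G).card - s.card)) -
      ∑ i ∈ I, (p ^ s.card * (1 - p) ^ ((edgeFinset' G).card - s.card)) *
        (if Q i (SimpleGraph.fromEdgeSet (↑s : Set (Sym2 V))) then 1 else 0) ≤
      (p ^ s.card * (1 - p) ^ ((edgeFinset' G).card - s.card)) *
        (if P (SimpleGraph.fromEdgeSet (↑s : Set (Sym2 V))) then 1 else 0) := by
    intro s hs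
    set w := p ^ s.card * (1 - p) ^ ((edgeFinset' G).card - s.card) with hw
    have hwn : 0 ≤ w := weight_nonneg hp0 hp1 _ _
    by_cases hP : P (SimpleGraph.fromEdgeSet (↑s : Set (Sym2 V)))
    · simp only [hP, if_true, mul_one]
      have : 0 ≤ ∑ i ∈ I, w * (if Q i (SimpleGraph.fromEdgeSet (↑s : Set (Sym2 V))) then 1 else 0) := by
        refine Finset.sum_nonneg fun i hi => mul_nonneg hwn ?_
        split <;> norm_num
      linarith
    · simp only [hP, if_false, mul_zero]
      obtain ⟨i, hi, hQ⟩ := h s hs hP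
      have : w ≤ ∑ i ∈ I, w * (if Q i (SimpleGraph.fromEdgeSet (↑s : Set (Sym2 V))) then 1 else 0) := by
        have := Finset.single_le_sum (f := fun i =>
          w * (if Q i (SimpleGraph.fromEdgeSet (↑s : Set (Sym2 V))) then 1 else 0))
          (fun i hi => mul_nonneg hwn (by split <;> norm_num)) hi
        simpa [hQ] using this
      linarith
  have h1 := Finset.sum_le_sum key
  rw [Finset.sum_sub_distrib, sum_weights] at h1
  rw [Finset.sum_comm] at h1
  simpa [percProb] using h1

lemma percProb_le_sum_cond {G : SimpleGraph V} {p : ℝ} (hp0 : 0 ≤ p) (hp1 : p ≤ 1)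
    {Q : SimpleGraph V → Prop} {F : Finset (Sym2 V)} (hF : F ⊆ edgeFinset' G)
    {cond : Finset (Sym2 V) → Prop}
    (h : ∀ s ∈ (edgeFinset' G).powerset, Q (SimpleGraph.fromEdgeSet (↑s : Set (Sym2 V))) →
      cond (s ∩ F)) :
    percProb G p Q ≤
      ∑ t ∈ F.powerset.filter cond, p ^ t.card * (1 - p) ^ (F.card - t.card) := by
  set E := edgeFinset' G with hE
  have hsub : ∀ s ∈ E.powerset, s ⊆ E := fun s hs => Finset.mem_powerset.1 hs
  have step1 : percProb G p Q ≤
      ∑ s ∈ E.powerset, (p ^ s.card * (1 - p) ^ (E.card - s.card)) *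
        (if cond (s ∩ F) then 1 else 0) := by
    refine Finset.sum_le_sum fun s hs => ?_
    refine mul_le_mul_of_nonneg_left ?_ (weight_nonneg hp0 hp1 _ _)
    by_cases hQ : Q (SimpleGraph.fromEdgeSet (↑s : Set (Sym2 V)))
    · simp [hQ, h s hs hQ]
    · simp only [hQ, if_false]
      split <;> norm_num
  have step2 : ∑ s ∈ E.powerset, (p ^ s.card * (1 - p) ^ (E.card - s.card)) *
        (if cond (s ∩ F) then 1 else 0)
      = ∑ q ∈ F.powerset ×ˢ (E \ F).powerset,
          ((p ^ q.1.card * (1 - p) ^ (F.card - q.1.card)) * (if cond q.1 then 1 else 0)) *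
          (p ^ q.2.card * (1 - p) ^ ((E \ F).card - q.2.card)) := by
    refine Finset.sum_nbij' (i := fun s => (s ∩ F, s \ F)) (j := fun q => q.1 ∪ q.2)
      ?_ ?_ ?_ ?_ ?_
    · intro s hs
      rw [Finset.mem_product, Finset.mem_powerset, Finset.mem_powerset]
      refine ⟨Finset.inter_subset_right, fun x hx => ?_⟩
      rw [Finset.mem_sdiff] at hx ⊢
      exact ⟨hsub s hs hx.1, hx.2⟩
    · intro q hq
      rw [Finset.mem_product, Finset.mem_powerset, Finset.mem_powerset] at hq
      rw [Finset.mem_powerset]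
      intro x hx
      rcases Finset.mem_union.1 hx with h1 | h1
      · exact hF (hq.1 h1)
      · exact (Finset.mem_sdiff.1 (hq.2 h1)).1
    · intro s hs
      simp only
      ext x
      simp only [Finset.mem_union, Finset.mem_inter, Finset.mem_sdiff]
      tauto
    · intro q hq
      rw [Finset.mem_product, Finset.mem_powerset, Finset.mem_powerset] at hq
      have h1 : (q.1 ∪ q.2) ∩ F = q.1 := by
        rw [Finset.union_inter_distrib_right]
        have e1 : q.1 ∩ F = q.1 := Finset.inter_eq_left.2 hq.1
        have e2 : q.2 ∩ F = ∅ := by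
          rw [Finset.eq_empty_iff_forall_notMem]
          intro x hx
          rw [Finset.mem_inter] at hx
          exact (Finset.mem_sdiff.1 (hq.2 hx.1)).2 hx.2
        rw [e1, e2, Finset.union_empty]
      have h2 : (q.1 ∪ q.2) \ F = q.2 := by
        rw [Finset.union_sdiff_distrib]
        have e1 : q.1 \ F = ∅ := by
          rw [Finset.sdiff_eq_empty_iff_subset]
          exact hq.1
        have e2 : q.2 \ F = q.2 := by
          rw [Finset.sdiff_eq_self_iff_disjoint]
          refine Finset.disjoint_left.2 fun x hx hxF => ?_
          exact (Finset.mem_sdiff.1 (hq.2 hx)).2 hxF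
        rw [e1, e2, Finset.empty_union]
      rw [Prod.ext_iff]
      exact ⟨h1, h2⟩
    · intro s hs
      have hcards : (s ∩ F).card + (s \ F).card = s.card :=
        Finset.card_inter_add_card_sdiff s F
      have hc1 : (s ∩ F).card ≤ F.card := Finset.card_le_card Finset.inter_subset_right
      have hc2 : (s \ F).card ≤ (E \ F).card := by
        refine Finset.card_le_card fun x hx => ?_
        rw [Finset.mem_sdiff] at hx ⊢
        exact ⟨hsub s hs hx.1, hx.2⟩
      have hFE : F.card + (E \ F).card = E.card := by
        have := Finset.card_sdiff_of_subset hF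
        have hFle := Finset.card_le_card hF
        omega
      have hexp : E.card - s.card = (F.card - (s ∩ F).card) + ((E \ F).card - (s \ F).card) := by
        have hsE : s.card ≤ E.card := Finset.card_le_card (hsub s hs)
        omega
      simp only
      rw [hexp, pow_add, ← hcards, pow_add]
      ring
  have step3 : ∑ q ∈ F.powerset ×ˢ (E \ F).powerset,
          ((p ^ q.1.card * (1 - p) ^ (F.card - q.1.card)) * (if cond q.1 then 1 else 0)) *
          (p ^ q.2.card * (1 - p) ^ ((E \ F).card - q.2.card))
      = ∑ t ∈ F.powerset, (p ^ t.card * (1 - p) ^ (F.card - t.card)) *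
          (if cond t then 1 else 0) := by
    rw [Finset.sum_product]
    refine Finset.sum_congr rfl fun t ht => ?_
    have hfac : ∑ u ∈ (E \ F).powerset,
        ((p ^ t.card * (1 - p) ^ (F.card - t.card)) * (if cond t then 1 else 0)) *
          (p ^ u.card * (1 - p) ^ ((E \ F).card - u.card))
        = ((p ^ t.card * (1 - p) ^ (F.card - t.card)) * (if cond t then 1 else 0)) *
          ∑ u ∈ (E \ F).powerset, (p ^ u.card * (1 - p) ^ ((E \ F).card - u.card)) := by
      rw [Finset.mul_sum]
    rw [hfac, sum_weights (E \ F) p, mul_one]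
  have step4 : ∑ t ∈ F.powerset, (p ^ t.card * (1 - p) ^ (F.card - t.card)) *
          (if cond t then 1 else 0)
      = ∑ t ∈ F.powerset.filter cond, p ^ t.card * (1 - p) ^ (F.card - t.card) := by
    rw [Finset.sum_filter]
    refine Finset.sum_congr rfl fun t ht => ?_
    split <;> simp
  calc percProb G p Q ≤ _ := step1
    _ = _ := step2
    _ = _ := step3
    _ = _ := step4


section NumericHelpers

lemma exp_quarter_lt : Real.exp (1/4) < 3/2 := by
  have h4 : (Real.exp (1/4)) ^ (4:ℕ) = Real.exp 1 := by
    rw [← Real.exp_nat_mul]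
    norm_num
  have he : Real.exp 1 < 2.7182818286 := Real.exp_one_lt_d9
  have hlt : (Real.exp (1/4)) ^ (4:ℕ) < (3/2 : ℝ) ^ (4:ℕ) := by
    rw [h4]
    norm_num at he ⊢
    linarith
  exact lt_of_pow_lt_pow_left₀ 4 (by norm_num) hlt

lemma catalan_le_four_pow (m : ℕ) : catalan m ≤ 4 ^ m := by
  have h1 : catalan m ≤ m.centralBinom := by
    rw [catalan_eq_centralBinom_div]
    exact Nat.div_le_self _ _
  have h2 : m.centralBinom ≤ 4 ^ m := by
    have h3 : m.centralBinom ≤ ∑ i ∈ Finset.range (2*m+1), (2*m).choose i := by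
      refine Finset.single_le_sum (f := fun i => (2*m).choose i) (fun i _ => Nat.zero_le _) ?_
      exact Finset.mem_range.2 (by omega)
    rw [Nat.sum_range_choose] at h3
    calc m.centralBinom ≤ 2 ^ (2*m) := h3
      _ = 4 ^ m := by rw [pow_mul]; norm_num
  exact le_trans h1 h2

lemma geom_tail (k m : ℕ) : ∑ c ∈ Finset.Ico k m, ((1:ℝ)/2) ^ c ≤ ((1:ℝ)/2) ^ k * 2 := by
  rcases le_or_gt k m with h | h
  · rw [Finset.sum_Ico_eq_sum_range]
    have : ∀ i, ((1:ℝ)/2) ^ (k + i) = ((1:ℝ)/2) ^ k * ((1:ℝ)/2) ^ i := fun i => pow_add _ _ _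
    simp only [this]
    rw [← Finset.mul_sum]
    refine mul_le_mul_of_nonneg_left ?_ (by positivity)
    have hgeom := geom_sum_eq (show ((1:ℝ)/2) ≠ 1 by norm_num) (m - k)
    rw [hgeom]
    have hp : (0:ℝ) ≤ ((1:ℝ)/2) ^ (m - k) := by positivity
    have : (((1:ℝ)/2) ^ (m-k) - 1) / ((1:ℝ)/2 - 1) = 2 * (1 - ((1:ℝ)/2) ^ (m-k)) := by
      ring
    rw [this]
    linarith
  · rw [Finset.Ico_eq_empty (by omega)]
    simp only [Finset.sum_empty]
    positivity

end NumericHelpers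

section PerSet

/-- the per-set failure probability bound -/
lemma perset_bound {G : SimpleGraph V} {b : ℝ} {d : ℕ} (hb : 0 < b) (hd : 3 ≤ d)
    {p : ℝ} (hp0 : 0 < p) (hp4 : 4 * p < ((24:ℝ) * d) ^ (-(2/b)))
    {S : Finset V} (hcut : b * (S.card : ℝ) ≤ (cutCard G S : ℝ)) :
    percProb G p (fun B => ¬ (b / 2 * (S.card : ℝ) ≤ (cutCard (G \ B) S : ℝ))) ≤
      ((24:ℝ) * d) ^ (-(S.card : ℝ)) := by
  have hd0 : (3:ℝ) ≤ (d:ℝ) := by exact_mod_cast hd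
  have h24 : (1:ℝ) ≤ 24 * d := by linarith
  have hpow1 : ((24:ℝ) * d) ^ (-(2/b)) ≤ 1 :=
    Real.rpow_le_one_of_one_le_of_nonpos h24 (by rw [neg_nonpos]; positivity)
  have hplt : p < 1/4 := by linarith
  have hp1 : p ≤ 1 := by linarith
  set F : Finset (Sym2 V) :=
    (edgeFinset' G).filter (fun e => ∃ x ∈ S, ∃ y, y ∉ S ∧ e = s(x, y)) with hF
  have hFsub : F ⊆ edgeFinset' G := Finset.filter_subset _ _
  have hmF : cutCard G S = F.card := rfl
  set m := F.card with hm
  set θ : ℝ := (m:ℝ) - b * (S.card:ℝ) / 2 with hθ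
  set cond : Finset (Sym2 V) → Prop := fun t => θ < (t.card : ℝ) with hcond
  -- event implication
  have himp : ∀ s ∈ (edgeFinset' G).powerset,
      (¬ (b / 2 * (S.card : ℝ) ≤ (cutCard (G \ SimpleGraph.fromEdgeSet (↑s : Set (Sym2 V))) S : ℝ)))
        → cond (s ∩ F) := by
    intro s hs hfail
    set B := SimpleGraph.fromEdgeSet (↑s : Set (Sym2 V)) with hB
    have hsubset : F \ s ⊆ (edgeFinset' (G \ B)).filter
        (fun e => ∃ x ∈ S, ∃ y, y ∉ S ∧ e = s(x, y)) := by
      intro e he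
      obtain ⟨heF, hes⟩ := Finset.mem_sdiff.1 he
      obtain ⟨heG, hecross⟩ := Finset.mem_filter.1 heF
      refine Finset.mem_filter.2 ⟨?_, hecross⟩
      have heG' : e ∈ G.edgeSet := by simpa [edgeFinset'] using heG
      have hGB : e ∈ (G \ B).edgeSet := by
        rw [SimpleGraph.edgeSet_sdiff]
        refine ⟨heG', ?_⟩
        rw [SimpleGraph.edgeSet_fromEdgeSet]
        intro hmem
        exact hes (by exact_mod_cast hmem.1)
      simpa [edgeFinset'] using hGB
    have hcard1 : (F ∩ s).card + (F \ s).card = F.card := Finset.card_inter_add_card_sdiff F s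
    have hcard2 : (F \ s).card ≤ cutCard (G \ B) S := Finset.card_le_card hsubset
    have hfail' : (cutCard (G \ B) S : ℝ) < b / 2 * (S.card : ℝ) := by
      push_neg at hfail
      exact hfail
    have hic : (s ∩ F).card = (F ∩ s).card := by rw [Finset.inter_comm]
    show θ < (((s ∩ F).card : ℕ) : ℝ)
    rw [hic]
    have : ((F ∩ s).card : ℝ) = (m:ℝ) - ((F \ s).card : ℝ) := by
      have hcast : (m:ℝ) = ((F ∩ s).card : ℝ) + ((F \ s).card : ℝ) := by
        exact_mod_cast hcard1.symm
      linarith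
    rw [this]
    have h2 : ((F \ s).card : ℝ) ≤ (cutCard (G \ B) S : ℝ) := by exact_mod_cast hcard2
    rw [hθ]
    linarith
  have hstep := percProb_le_sum_cond
    (Q := fun B => ¬ (b / 2 * (S.card : ℝ) ≤ (cutCard (G \ B) S : ℝ)))
    (cond := cond) hp0.le hp1 hFsub himp
  -- bound the sum
  have hm_lb : b * (S.card:ℝ) ≤ (m:ℝ) := by rw [← hmF]; exact hcut
  have hθ0 : 0 ≤ θ := by
    rw [hθ]
    have : 0 ≤ b * (S.card:ℝ) := by positivity
    linarith
  have hsum_le : ∑ t ∈ F.powerset.filter cond, p ^ t.card * (1 - p) ^ (F.card - t.card)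
      ≤ (2:ℝ) ^ (m:ℝ) * p ^ θ := by
    have hterm : ∀ t ∈ F.powerset.filter cond,
        p ^ t.card * (1 - p) ^ (F.card - t.card) ≤ p ^ θ := by
      intro t ht
      have hcondt : θ < (t.card:ℝ) := (Finset.mem_filter.1 ht).2
      have h1 : p ^ t.card * (1 - p) ^ (F.card - t.card) ≤ p ^ t.card := by
        have : (1 - p) ^ (F.card - t.card) ≤ 1 :=
          pow_le_one₀ (by linarith) (by linarith)
        nlinarith [pow_nonneg hp0.le t.card]
      have h2 : (p : ℝ) ^ (t.card : ℕ) = p ^ ((t.card : ℕ) : ℝ) := by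
        rw [Real.rpow_natCast]
      have h3 : p ^ ((t.card : ℕ) : ℝ) ≤ p ^ θ :=
        Real.rpow_le_rpow_of_exponent_ge hp0 hp1 hcondt.le
      calc p ^ t.card * (1 - p) ^ (F.card - t.card) ≤ p ^ t.card := h1
        _ = p ^ ((t.card : ℕ) : ℝ) := h2
        _ ≤ p ^ θ := h3
    calc ∑ t ∈ F.powerset.filter cond, p ^ t.card * (1 - p) ^ (F.card - t.card)
        ≤ ∑ t ∈ F.powerset.filter cond, p ^ θ := Finset.sum_le_sum hterm
      _ = ((F.powerset.filter cond).card : ℝ) * p ^ θ := by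
          rw [Finset.sum_const, nsmul_eq_mul]
      _ ≤ (2:ℝ) ^ (m:ℝ) * p ^ θ := by
          refine mul_le_mul_of_nonneg_right ?_ (Real.rpow_nonneg hp0.le _)
          have hle : (F.powerset.filter cond).card ≤ 2 ^ m := by
            calc (F.powerset.filter cond).card ≤ F.powerset.card :=
                Finset.card_le_card (Finset.filter_subset _ _)
              _ = 2 ^ m := by rw [Finset.card_powerset]
          calc ((F.powerset.filter cond).card : ℝ) ≤ ((2 ^ m : ℕ) : ℝ) := by exact_mod_cast hle
            _ = (2:ℝ) ^ (m:ℕ) := by push_cast; ring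
            _ = (2:ℝ) ^ ((m:ℕ) : ℝ) := by rw [Real.rpow_natCast]
  -- rpow manipulation
  have h2p : 0 < 2 * p := by linarith
  have h2p1 : 2 * p ≤ 1 := by linarith
  have hfinal : (2:ℝ) ^ (m:ℝ) * p ^ θ ≤ ((24:ℝ) * d) ^ (-(S.card : ℝ)) := by
    have e1 : (2:ℝ) ^ (m:ℝ) * p ^ θ
        = (2 * p) ^ (m:ℝ) * p ^ (-(b * (S.card:ℝ) / 2)) := by
      rw [hθ, sub_eq_add_neg, Real.rpow_add hp0, Real.mul_rpow (by norm_num) hp0.le]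
      ring
    have e2 : (2 * p) ^ (m:ℝ) ≤ (2 * p) ^ (b * (S.card:ℝ)) :=
      Real.rpow_le_rpow_of_exponent_ge h2p h2p1 hm_lb
    have e3 : (2 * p) ^ (b * (S.card:ℝ)) * p ^ (-(b * (S.card:ℝ) / 2))
        = (4 * p) ^ (b * (S.card:ℝ) / 2) := by
      have e4 : (2 * p) ^ (b * (S.card:ℝ)) = ((2*p) ^ (2:ℝ)) ^ (b * (S.card:ℝ) / 2) := by
        rw [← Real.rpow_mul h2p.le]
        congr 1
        ring
      rw [e4, Real.rpow_two]
      have e5 : p ^ (-(b * (S.card:ℝ) / 2)) = (p⁻¹) ^ (b * (S.card:ℝ) / 2) := by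
        rw [Real.inv_rpow hp0.le, ← Real.rpow_neg hp0.le]
      rw [e5, ← Real.mul_rpow (by positivity) (by positivity)]
      congr 1
      field_simp
      ring
    have e6 : (4 * p) ^ (b * (S.card:ℝ) / 2) ≤ (((24:ℝ)*d) ^ (-(2/b))) ^ (b * (S.card:ℝ) / 2) :=
      Real.rpow_le_rpow (by linarith) hp4.le (by positivity)
    have e7 : (((24:ℝ)*d) ^ (-(2/b))) ^ (b * (S.card:ℝ) / 2) = ((24:ℝ)*d) ^ (-(S.card:ℝ)) := by
      rw [← Real.rpow_mul (by linarith)]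
      congr 1
      have hbne : b ≠ 0 := ne_of_gt hb
      field_simp
    calc (2:ℝ) ^ (m:ℝ) * p ^ θ
        = (2 * p) ^ (m:ℝ) * p ^ (-(b * (S.card:ℝ) / 2)) := e1
      _ ≤ (2 * p) ^ (b * (S.card:ℝ)) * p ^ (-(b * (S.card:ℝ) / 2)) := by
          refine mul_le_mul_of_nonneg_right e2 (Real.rpow_nonneg hp0.le _)
      _ = (4 * p) ^ (b * (S.card:ℝ) / 2) := e3
      _ ≤ (((24:ℝ)*d) ^ (-(2/b))) ^ (b * (S.card:ℝ) / 2) := e6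
      _ = ((24:ℝ)*d) ^ (-(S.card:ℝ)) := e7
  exact le_trans hstep (le_trans hsum_le hfinal)

end PerSet

section ThickSum

/-- sum over thick sets is controlled -/
lemma sum_thick_le {G : SimpleGraph V} {d k : ℕ} (hd : 3 ≤ d) (hk : 1 ≤ k)
    (hdeg : ∀ v : V, (G.neighborFinset v).card ≤ d)
    {𝒮 : Finset (Finset V)} (h𝒮 : ∀ S ∈ 𝒮, IsThick G k S) :
    ∑ S ∈ 𝒮, (((8:ℝ) * d)⁻¹) ^ S.card ≤
      Real.exp ((Fintype.card V : ℝ) * 2 * ((1:ℝ)/2) ^ k) := by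
  have hd0 : (3:ℝ) ≤ (d:ℝ) := by exact_mod_cast hd
  set n := Fintype.card V with hn
  set u : ℝ := ((8:ℝ) * d)⁻¹ with hu
  have hu0 : 0 ≤ u := by positivity
  have hu2 : u ≤ 1/2 := by
    rw [hu]
    rw [inv_le_comm₀ (by linarith) (by norm_num)]
    linarith
  set 𝒞 : Finset (Finset V) :=
    Finset.univ.filter (fun T : Finset V => k ≤ T.card ∧ ConnF G T) with h𝒞
  -- step A : injection into powerset
  have hΨ : ∀ S ∈ 𝒮, ∃ P : Finset (Finset V), P ∈ 𝒞.powerset ∧ S = P.biUnion id ∧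
      ∏ T ∈ P, u ^ T.card = u ^ S.card := by
    intro S hS
    obtain ⟨P, hP1, hP2, hP3⟩ := h𝒮 S hS
    refine ⟨P, ?_, hP3, ?_⟩
    · rw [Finset.mem_powerset]
      intro T hT
      rw [h𝒞, Finset.mem_filter]
      exact ⟨Finset.mem_univ _, (hP1 T hT).1, connF_of_induce_connected (hP1 T hT).2⟩
    · rw [Finset.prod_pow_eq_pow_sum]
      congr 1
      rw [hP3]
      exact (Finset.card_biUnion
        (fun x hx y hy hxy => hP2 (Finset.mem_coe.2 hx) (Finset.mem_coe.2 hy) hxy)).symm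
  choose Ψ hΨmem hΨun hΨprod using hΨ
  set Ψ' : Finset V → Finset (Finset V) := fun S => if h : S ∈ 𝒮 then Ψ S h else ∅ with hΨ'
  have hA : ∑ S ∈ 𝒮, u ^ S.card ≤ ∑ Q ∈ 𝒞.powerset, ∏ T ∈ Q, u ^ T.card := by
    have e1 : ∑ S ∈ 𝒮, u ^ S.card = ∑ S ∈ 𝒮, ∏ T ∈ Ψ' S, u ^ T.card := by
      refine Finset.sum_congr rfl fun S hS => ?_
      rw [hΨ']
      simp only [hS, dif_pos]
      exact (hΨprod S hS).symm
    have e2 : ∑ Q ∈ 𝒮.image Ψ', ∏ T ∈ Q, u ^ T.card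
        = ∑ S ∈ 𝒮, ∏ T ∈ Ψ' S, u ^ T.card := by
      refine Finset.sum_image ?_
      intro S1 h1 S2 h2 heq
      have u1 := hΨun S1 h1
      have u2 := hΨun S2 h2
      rw [hΨ'] at heq
      simp only [Finset.mem_coe.1 h1, Finset.mem_coe.1 h2, dif_pos] at heq
      rw [u1, u2, heq]
    have e3 : 𝒮.image Ψ' ⊆ 𝒞.powerset := by
      intro Q hQ
      obtain ⟨S, hS, rfl⟩ := Finset.mem_image.1 hQ
      rw [hΨ']
      simp only [hS, dif_pos]
      exact hΨmem S hS
    rw [e1, ← e2]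
    refine Finset.sum_le_sum_of_subset_of_nonneg e3 fun Q _ _ => ?_
    exact Finset.prod_nonneg fun T _ => pow_nonneg hu0 _
  -- step B : product formula
  have hB : ∑ Q ∈ 𝒞.powerset, ∏ T ∈ Q, u ^ T.card = ∏ T ∈ 𝒞, (u ^ T.card + 1) := by
    have := Finset.prod_add (fun T : Finset V => u ^ T.card) (fun _ => (1:ℝ)) 𝒞
    rw [this]
    refine Finset.sum_congr rfl fun Q hQ => ?_
    rw [Finset.prod_const_one, mul_one]
  -- step C : product ≤ exp sum
  have hC : ∏ T ∈ 𝒞, (u ^ T.card + 1) ≤ Real.exp (∑ T ∈ 𝒞, u ^ T.card) := by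
    rw [Real.exp_sum]
    refine Finset.prod_le_prod (fun T _ => by positivity) fun T _ => ?_
    exact Real.add_one_le_exp _
  -- step D : sum over 𝒞
  have hD : ∑ T ∈ 𝒞, u ^ T.card ≤ (n:ℝ) * 2 * ((1:ℝ)/2) ^ k := by
    have hfib : ∑ T ∈ 𝒞, u ^ T.card
        = ∑ c ∈ Finset.range (n+1), ∑ T ∈ 𝒞.filter (fun T => T.card = c), u ^ T.card := by
      refine (Finset.sum_fiberwise_of_maps_to (fun T _ => Finset.mem_range.2 ?_) _).symm
      have h := Finset.card_le_univ T
      have h2 : T.card ≤ Fintype.card V := by simpa using h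
      rw [← hn] at h2
      omega
    rw [hfib]
    have hinner : ∀ c ∈ Finset.range (n+1),
        ∑ T ∈ 𝒞.filter (fun T => T.card = c), u ^ T.card
        ≤ if k ≤ c then (n:ℝ) * ((1:ℝ)/2) ^ c else 0 := by
      intro c hc
      by_cases hkc : k ≤ c
      · simp only [hkc, if_true]
        have hval : ∑ T ∈ 𝒞.filter (fun T => T.card = c), u ^ T.card
            = ((𝒞.filter (fun T => T.card = c)).card : ℝ) * u ^ c := by
          rw [Finset.sum_congr rfl (fun T hT => ?_), Finset.sum_const, nsmul_eq_mul]
          rw [(Finset.mem_filter.1 hT).2]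
        rw [hval]
        -- fiber card bound
        obtain ⟨c', rfl⟩ : ∃ c', c = c' + 1 := ⟨c - 1, by omega⟩
        have hcard : (𝒞.filter (fun T => T.card = c' + 1)).card ≤ n * (d ^ c' * catalan c') := by
          have hsub : 𝒞.filter (fun T => T.card = c' + 1) ⊆
              Finset.univ.biUnion (fun v : V => Conn G v (c' + 1)) := by
            intro T hT
            obtain ⟨hT𝒞, hTc⟩ := Finset.mem_filter.1 hT
            obtain ⟨-, hk', hconn⟩ := Finset.mem_filter.1 hT𝒞
            obtain ⟨v, hv⟩ := Finset.card_pos.1 (by omega : 0 < T.card)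
            refine Finset.mem_biUnion.2 ⟨v, Finset.mem_univ _, ?_⟩
            rw [Conn, Finset.mem_filter]
            exact ⟨Finset.mem_univ _, hv, hTc, hconn⟩
          calc (𝒞.filter (fun T => T.card = c' + 1)).card
              ≤ (Finset.univ.biUnion (fun v : V => Conn G v (c' + 1))).card :=
                Finset.card_le_card hsub
            _ ≤ ∑ v : V, (Conn G v (c' + 1)).card := Finset.card_biUnion_le
            _ ≤ ∑ v : V, d ^ c' * catalan c' := by
                refine Finset.sum_le_sum fun v _ => ?_
                have := conn_card_le G d hdeg (c' + 1) v
                simpa using this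
            _ = n * (d ^ c' * catalan c') := by
                rw [Finset.sum_const, Finset.card_univ, smul_eq_mul]
        have hcast : ((𝒞.filter (fun T => T.card = c' + 1)).card : ℝ)
            ≤ (n : ℝ) * ((4 * d : ℕ) ^ c' : ℝ) := by
          have h2 : (𝒞.filter (fun T => T.card = c' + 1)).card ≤ n * (4 * d) ^ c' := by
            refine le_trans hcard (Nat.mul_le_mul_left _ ?_)
            calc d ^ c' * catalan c' ≤ d ^ c' * 4 ^ c' :=
                Nat.mul_le_mul_left _ (catalan_le_four_pow c')
              _ = (4 * d) ^ c' := by rw [← mul_pow]; ring_nf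
          exact_mod_cast h2
        have hu_eq : ((4 * d : ℕ) : ℝ) * u = 1/2 := by
          push_cast
          rw [hu]
          field_simp
          ring
        calc ((𝒞.filter (fun T => T.card = c' + 1)).card : ℝ) * u ^ (c' + 1)
            ≤ ((n : ℝ) * ((4 * d : ℕ) ^ c' : ℝ)) * u ^ (c' + 1) := by
              refine mul_le_mul_of_nonneg_right hcast (by positivity)
          _ = (n:ℝ) * ((((4 * d : ℕ) : ℝ) * u) ^ c' * u) := by
              rw [mul_pow, pow_succ]
              ring
          _ = (n:ℝ) * (((1:ℝ)/2) ^ c' * u) := by rw [hu_eq]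
          _ ≤ (n:ℝ) * (((1:ℝ)/2) ^ c' * (1/2)) := by
              refine mul_le_mul_of_nonneg_left ?_ (by positivity)
              refine mul_le_mul_of_nonneg_left hu2 (by positivity)
          _ = (n:ℝ) * ((1:ℝ)/2) ^ (c' + 1) := by rw [pow_succ]
      · simp only [hkc, if_false]
        have : 𝒞.filter (fun T => T.card = c) = ∅ := by
          rw [Finset.eq_empty_iff_forall_notMem]
          intro T hT
          obtain ⟨hT𝒞, hTc⟩ := Finset.mem_filter.1 hT
          obtain ⟨-, hk', -⟩ := Finset.mem_filter.1 hT𝒞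
          omega
        rw [this]
        simp
    calc ∑ c ∈ Finset.range (n+1), ∑ T ∈ 𝒞.filter (fun T => T.card = c), u ^ T.card
        ≤ ∑ c ∈ Finset.range (n+1), (if k ≤ c then (n:ℝ) * ((1:ℝ)/2) ^ c else 0) :=
          Finset.sum_le_sum hinner
      _ = ∑ c ∈ (Finset.range (n+1)).filter (fun c => k ≤ c), (n:ℝ) * ((1:ℝ)/2) ^ c := by
          rw [Finset.sum_filter]
      _ = ∑ c ∈ Finset.Ico k (n+1), (n:ℝ) * ((1:ℝ)/2) ^ c := by
          congr 1
          ext c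
          simp only [Finset.mem_filter, Finset.mem_range, Finset.mem_Ico]
          omega
      _ = (n:ℝ) * ∑ c ∈ Finset.Ico k (n+1), ((1:ℝ)/2) ^ c := by rw [Finset.mul_sum]
      _ ≤ (n:ℝ) * (((1:ℝ)/2) ^ k * 2) := by
          refine mul_le_mul_of_nonneg_left (geom_tail k (n+1)) (by positivity)
      _ = (n:ℝ) * 2 * ((1:ℝ)/2) ^ k := by ring
  calc ∑ S ∈ 𝒮, u ^ S.card ≤ ∑ Q ∈ 𝒞.powerset, ∏ T ∈ Q, u ^ T.card := hA
    _ = ∏ T ∈ 𝒞, (u ^ T.card + 1) := hB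
    _ ≤ Real.exp (∑ T ∈ 𝒞, u ^ T.card) := hC
    _ ≤ Real.exp ((n:ℝ) * 2 * ((1:ℝ)/2) ^ k) := Real.exp_le_exp.2 hD

end ThickSum

theorem red_expansion_of_thick_sets (b : ℝ) (hb : 0 < b) (d : ℕ) (hd : 3 ≤ d)
    (ε : ℝ) (hε : 0 < ε)
    (hsmall : 3 * d * Real.sqrt ε < 1 / 4 * (24 * (d : ℝ)) ^ (-(2 / b))) :
    ∃ k : ℕ, 0 < k ∧ ∃ C > (0:ℝ),
      ∀ (V : Type) [Fintype V] [DecidableEq V] (G : SimpleGraph V),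
        IsRegularExpander G b d →
        1 - C * (2 : ℝ) ^ (-(ε * Fintype.card V)) ≤
          percProb G (3 * d * Real.sqrt ε) (fun B =>
            ∀ S : Finset V, IsThick G k S →
              ε * Fintype.card V ≤ S.card → (S.card : ℝ) ≤ Fintype.card V / 2 →
              b / 2 * S.card ≤ cutCard (G \ B) S) := by
  have hd0 : (3:ℝ) ≤ (d:ℝ) := by exact_mod_cast hd
  set p : ℝ := 3 * d * Real.sqrt ε with hp
  have hsq : 0 < Real.sqrt ε := Real.sqrt_pos.2 hε
  have hp0 : 0 < p := by rw [hp]; positivity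
  have h24 : (1:ℝ) ≤ 24 * d := by linarith
  have hpow1 : ((24:ℝ) * d) ^ (-(2/b)) ≤ 1 :=
    Real.rpow_le_one_of_one_le_of_nonpos h24 (by rw [neg_nonpos]; positivity)
  have hp4 : 4 * p < ((24:ℝ) * d) ^ (-(2/b)) := by linarith
  have hplt : p < 1/4 := by linarith
  have hp1 : p ≤ 1 := by linarith
  -- choose k
  obtain ⟨k0, hk0⟩ := exists_pow_lt_of_lt_one (show (0:ℝ) < ε/8 by linarith)
    (show (1:ℝ)/2 < 1 by norm_num)
  set k := max k0 1 with hk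
  have hk1 : 1 ≤ k := le_max_right _ _
  have hkb : ((1:ℝ)/2) ^ k ≤ ε/8 := by
    refine le_trans ?_ hk0.le
    exact pow_le_pow_of_le_one (by norm_num) (by norm_num) (le_max_left _ _)
  refine ⟨k, hk1, 1, one_pos, ?_⟩
  intro V _ _ G hG
  classical
  set n := Fintype.card V with hn
  obtain ⟨⟨hdeg, hexp⟩, hreg⟩ := hG
  have hdeg' : ∀ v : V, (G.neighborFinset v).card ≤ d := by
    intro v
    have h1 := hdeg v
    rw [Set.ncard_eq_toFinset_card'] at h1
    simpa [SimpleGraph.neighborFinset] using h1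
  set 𝒮 : Finset (Finset V) := Finset.univ.filter
    (fun S : Finset V => IsThick G k S ∧ (ε * n ≤ (S.card:ℝ)) ∧ ((S.card:ℝ) ≤ (n:ℝ)/2)) with h𝒮
  set Q : Finset V → SimpleGraph V → Prop :=
    fun S B => ¬ (b / 2 * (S.card : ℝ) ≤ (cutCard (G \ B) S : ℝ)) with hQ
  have hub : 1 - ∑ S ∈ 𝒮, percProb G p (Q S) ≤
      percProb G p (fun B => ∀ S : Finset V, IsThick G k S →
        ε * n ≤ S.card → (S.card : ℝ) ≤ (n:ℝ) / 2 →
        b / 2 * S.card ≤ (cutCard (G \ B) S : ℝ)) := by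
    refine percProb_ge_one_sub hp0.le hp1 ?_
    intro s hs hnot
    replace hnot : ¬ ∀ S : Finset V, IsThick G k S →
        ε * n ≤ S.card → (S.card : ℝ) ≤ (n:ℝ) / 2 →
        b / 2 * S.card ≤ (cutCard (G \ SimpleGraph.fromEdgeSet (↑s : Set (Sym2 V))) S : ℝ) := hnot
    push_neg at hnot
    obtain ⟨S, hthick, h1, h2, h3⟩ := hnot
    refine ⟨S, ?_, ?_⟩
    · rw [h𝒮, Finset.mem_filter]
      exact ⟨Finset.mem_univ _, hthick, h1, h2⟩
    · rw [hQ]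
      push_neg
      exact h3
  -- sum of per-set bounds
  have hSig : ∑ S ∈ 𝒮, percProb G p (Q S) ≤ (2:ℝ) ^ (-(ε * n)) := by
    have hεn0 : 0 ≤ ε * n := by positivity
    have hper : ∀ S ∈ 𝒮, percProb G p (Q S) ≤
        (3:ℝ) ^ (-(ε * n)) * (((8:ℝ) * d)⁻¹) ^ S.card := by
      intro S hS
      rw [h𝒮, Finset.mem_filter] at hS
      obtain ⟨-, hthick, h1, h2⟩ := hS
      have hcut : b * (S.card : ℝ) ≤ (cutCard G S : ℝ) := hexp S h2
      have hps := perset_bound hb hd hp0 hp4 hcut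
      refine le_trans hps ?_
      -- (24d)^(-(s:ℝ)) = (3⁻¹)^s * ((8d)⁻¹)^s ≤ 3^(-(εn)) * ((8d)⁻¹)^s
      have hsplit : ((24:ℝ) * d) ^ (-(S.card : ℝ))
          = ((3:ℝ)⁻¹) ^ S.card * (((8:ℝ) * d)⁻¹) ^ S.card := by
        rw [Real.rpow_neg (by linarith), Real.rpow_natCast]
        rw [← mul_pow, ← mul_inv]
        rw [← inv_pow]
        congr 2
        ring
      rw [hsplit]
      refine mul_le_mul_of_nonneg_right ?_ (by positivity)
      have e1 : ((3:ℝ)⁻¹) ^ S.card = (3:ℝ) ^ (-(S.card:ℝ)) := by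
        rw [Real.rpow_neg (by norm_num), Real.rpow_natCast, inv_pow]
      rw [e1]
      exact Real.rpow_le_rpow_of_exponent_le (by norm_num) (by linarith)
    have hthicks : ∀ S ∈ 𝒮, IsThick G k S := by
      intro S hS
      rw [h𝒮, Finset.mem_filter] at hS
      exact hS.2.1
    have hsum2 := sum_thick_le hd hk1 hdeg' hthicks
    calc ∑ S ∈ 𝒮, percProb G p (Q S)
        ≤ ∑ S ∈ 𝒮, (3:ℝ) ^ (-(ε * n)) * (((8:ℝ) * d)⁻¹) ^ S.card :=
          Finset.sum_le_sum hper
      _ = (3:ℝ) ^ (-(ε * n)) * ∑ S ∈ 𝒮, (((8:ℝ) * d)⁻¹) ^ S.card := by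
          rw [Finset.mul_sum]
      _ ≤ (3:ℝ) ^ (-(ε * n)) * Real.exp ((n : ℝ) * 2 * ((1:ℝ)/2) ^ k) := by
          refine mul_le_mul_of_nonneg_left hsum2 (Real.rpow_nonneg (by norm_num) _)
      _ ≤ (3:ℝ) ^ (-(ε * n)) * ((3:ℝ)/2) ^ (ε * n) := by
          refine mul_le_mul_of_nonneg_left ?_ (Real.rpow_nonneg (by norm_num) _)
          have hexp1 : (n : ℝ) * 2 * ((1:ℝ)/2) ^ k ≤ (1/4) * (ε * n) := by
            have hn0 : (0:ℝ) ≤ n := Nat.cast_nonneg _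
            have := mul_le_mul_of_nonneg_left hkb (by linarith : (0:ℝ) ≤ (n:ℝ) * 2)
            calc (n : ℝ) * 2 * ((1:ℝ)/2) ^ k ≤ (n:ℝ) * 2 * (ε/8) := this
              _ = (1/4) * (ε * n) := by ring
          calc Real.exp ((n : ℝ) * 2 * ((1:ℝ)/2) ^ k)
              ≤ Real.exp ((1/4) * (ε * n)) := Real.exp_le_exp.2 hexp1
            _ = (Real.exp (1/4)) ^ (ε * n) := by
                rw [Real.rpow_def_of_pos (Real.exp_pos _), Real.log_exp]
            _ ≤ ((3:ℝ)/2) ^ (ε * n) :=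
                Real.rpow_le_rpow (Real.exp_pos _).le exp_quarter_lt.le hεn0
      _ = (2:ℝ) ^ (-(ε * n)) := by
          have h3 : (0:ℝ) < (3:ℝ) ^ (ε * (n:ℝ)) := Real.rpow_pos_of_pos (by norm_num) _
          have h2 : (0:ℝ) < (2:ℝ) ^ (ε * (n:ℝ)) := Real.rpow_pos_of_pos (by norm_num) _
          rw [Real.rpow_neg (by norm_num : (0:ℝ) ≤ 3), Real.rpow_neg (by norm_num : (0:ℝ) ≤ 2),
            Real.div_rpow (by norm_num) (by norm_num)]
          field_simp
  rw [one_mul]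
  calc 1 - (2:ℝ) ^ (-(ε * (n:ℝ))) ≤ 1 - ∑ S ∈ 𝒮, percProb G p (Q S) := by linarith
    _ ≤ _ := hub


end Percolation

end
end
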